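/- arXiv:0710.0046 — 5 statements merged into one kernel-verified Lean document; each statement's English description precedes it below -/
import Mathlib

section
/- Let Γ = (V, R) be a basis digraph of an association scheme C. Then Γ is strongly connected if and only if the undirected graph (V, R ∪ R^T) is connected; equivalently, ⟨R⟩ = V × V. -/
open Set Function

section Defs

variable {V : Type*}

/-- The diagonal relation on `V`. -/
def diag (V : Type*) : Set (V × V) := {x | x.1 = x.2}

/-- The transpose of a relation. -/
def transp (R : Set (V × V)) : Set (V × V) := {x | (x.2, x.1) ∈ R}

/-- Relational composition (product of relations). -/
def comp (R S : Set (V × V)) : Set (V × V) := {x | ∃ w, (x.1, w) ∈ R ∧ (w, x.2) ∈ S}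

/-- The `n`-fold relational power, with `R^0` the diagonal. -/
def relPow (R : Set (V × V)) : ℕ → Set (V × V)
  | 0 => diag V
  | n + 1 => comp (relPow R n) R

/-- `⟨R⟩`, the union of all relational powers of `R`. -/
def gen (R : Set (V × V)) : Set (V × V) := ⋃ i, relPow R i

/-- Strong connectivity: every ordered pair is joined by a directed walk of positive length
(so every vertex has nonempty out-neighborhood). -/
def StronglyConnected (R : Set (V × V)) : Prop :=
  ∀ u v : V, ∃ n, 0 < n ∧ (u, v) ∈ relPow R n

/-- A digraph `(V, R)` is cyclically `p`-partite: the vertices are partitioned into `p`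
nonempty parts indexed by `ZMod p` such that every arc goes from part `r` to part `r + 1`. -/
def CyclicallyPartite (p : ℕ) (R : Set (V × V)) : Prop :=
  ∃ f : V → ZMod p, Surjective f ∧ ∀ u v : V, (u, v) ∈ R → f v = f u + 1

/-- The induced subdigraph on `X ⊆ V` is cyclically `p`-partite. -/
def CyclicallyPartiteOn (p : ℕ) (X : Set V) (R : Set (V × V)) : Prop :=
  ∃ f : V → ZMod p, (∀ r : ZMod p, ∃ v ∈ X, f v = r) ∧
    ∀ u ∈ X, ∀ v ∈ X, (u, v) ∈ R → f v = f u + 1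

/-- The out-neighborhood `R(u)`. -/
def neighb (R : Set (V × V)) (u : V) : Set V := {v | (u, v) ∈ R}

/-- A homogeneous coherent configuration (association scheme) on a finite set `V`. -/
structure AssocScheme (V : Type*) [Fintype V] where
  classes : Set (Set (V × V))
  part : ∀ x : V × V, ∃! R, R ∈ classes ∧ x ∈ R
  nonempty_mem : ∀ R ∈ classes, R.Nonempty
  transp_mem : ∀ R ∈ classes, transp R ∈ classes
  diag_mem : diag V ∈ classes
  inter : ∀ R ∈ classes, ∀ S ∈ classes, ∀ T ∈ classes, ∀ x ∈ T, ∀ y ∈ T,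
    ({w : V | (Prod.fst x, w) ∈ R ∧ (w, Prod.snd x) ∈ S}).ncard =
    ({w : V | (Prod.fst y, w) ∈ R ∧ (w, Prod.snd y) ∈ S}).ncard

/-- A `p`-scheme: every basis relation has cardinality a power of `p`. -/
def IsPScheme (p : ℕ) {V : Type*} [Fintype V] (C : AssocScheme V) : Prop :=
  ∀ R ∈ C.classes, ∃ k : ℕ, R.ncard = p ^ k

/-- A scheme equivalence: a union of basis relations that is an equivalence relation on `V`. -/
def IsSchemeEquiv {V : Type*} [Fintype V] (C : AssocScheme V) (E : Set (V × V)) : Prop :=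
  (∃ D ⊆ C.classes, E = ⋃₀ D) ∧ Equivalence (fun u v : V => (u, v) ∈ E)

/-- The set of classes of an equivalence relation `E` on `V`. -/
def classesOf {V : Type*} (E : Set (V × V)) : Set (Set V) :=
  {X | ∃ u : V, X = {v | (u, v) ∈ E}}

/-- The quotient relation `R_{V/E}` on the set of classes of `E`. -/
def quotRel {V : Type*} (E R : Set (V × V)) : Set (Set V × Set V) :=
  {q | q.1 ∈ classesOf E ∧ q.2 ∈ classesOf E ∧ (R ∩ q.1 ×ˢ q.2).Nonempty}

/-- A maximal scheme equivalence: `E ≠ V × V` and no scheme equivalence other than `V × V`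
properly contains it. -/
def MaximalEquiv {V : Type*} [Fintype V] (C : AssocScheme V) (E : Set (V × V)) : Prop :=
  IsSchemeEquiv C E ∧ E ≠ Set.univ ∧
    ∀ F, IsSchemeEquiv C F → E ⊆ F → F ≠ Set.univ → F = E

end Defs

section Aux

variable {V : Type*}

lemma mem_relPow_trans {R : Set (V × V)} {u v w : V} {m n : ℕ}
    (h1 : (u, v) ∈ relPow R m) (h2 : (v, w) ∈ relPow R n) :
    (u, w) ∈ relPow R (m + n) := by
  induction n generalizing w with
  | zero =>
    have : v = w := h2
    subst this; exact h1
  | succ n ih =>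
    obtain ⟨x, hx1, hx2⟩ := h2
    exact ⟨x, ih hx1, hx2⟩

lemma mem_gen_of_mem {R : Set (V × V)} {u v : V} (h : (u, v) ∈ R) : (u, v) ∈ gen R :=
  Set.mem_iUnion.2 ⟨1, ⟨u, rfl, h⟩⟩

lemma gen_refl (R : Set (V × V)) (u : V) : (u, u) ∈ gen R :=
  Set.mem_iUnion.2 ⟨0, rfl⟩

lemma gen_trans {R : Set (V × V)} {u v w : V}
    (h1 : (u, v) ∈ gen R) (h2 : (v, w) ∈ gen R) : (u, w) ∈ gen R := by
  obtain ⟨m, hm⟩ := Set.mem_iUnion.1 h1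
  obtain ⟨n, hn⟩ := Set.mem_iUnion.1 h2
  exact Set.mem_iUnion.2 ⟨m + n, mem_relPow_trans hm hn⟩

variable [Fintype V]

lemma outdeg_const (C : AssocScheme V) {R : Set (V × V)} (hR : R ∈ C.classes) (u v : V) :
    {w | (u, w) ∈ R}.ncard = {w | (v, w) ∈ R}.ncard := by
  have h := C.inter R hR (transp R) (C.transp_mem R hR) (diag V) C.diag_mem
    (u, u) rfl (v, v) rfl
  simpa [transp, and_self] using h

lemma indeg_const (C : AssocScheme V) {R : Set (V × V)} (hR : R ∈ C.classes) (u v : V) :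
    {w | (w, u) ∈ R}.ncard = {w | (w, v) ∈ R}.ncard := by
  have h := C.inter (transp R) (C.transp_mem R hR) R hR (diag V) C.diag_mem
    (u, u) rfl (v, v) rfl
  simpa [transp, and_self] using h

open Finset in
lemma ncard_filter (p : V → Prop) [DecidablePred p] :
    {w | p w}.ncard = (Finset.univ.filter p).card := by
  classical
  rw [Set.ncard_eq_toFinset_card']
  congr 1
  ext x
  simp

open Finset in
lemma deg_eq (C : AssocScheme V) {R : Set (V × V)} (hR : R ∈ C.classes) (a : V) :
    {w | (a, w) ∈ R}.ncard = {w | (w, a) ∈ R}.ncard := by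
  classical
  have hsum : ∑ u : V, (univ.filter fun w => (u, w) ∈ R).card
      = ∑ u : V, (univ.filter fun w => (w, u) ∈ R).card := by
    simp only [Finset.card_filter]
    exact Finset.sum_comm
  have ho : ∀ u : V, (univ.filter fun w => (u, w) ∈ R).card
      = (univ.filter fun w => (a, w) ∈ R).card := by
    intro u
    rw [← ncard_filter, ← ncard_filter]
    exact outdeg_const C hR u a
  have hi : ∀ u : V, (univ.filter fun w => (w, u) ∈ R).card
      = (univ.filter fun w => (w, a) ∈ R).card := by
    intro u
    rw [← ncard_filter, ← ncard_filter]
    exact indeg_const C hR u a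
  rw [Finset.sum_congr rfl (fun u _ => ho u), Finset.sum_congr rfl (fun u _ => hi u),
    Finset.sum_const, Finset.sum_const] at hsum
  have hpos : 0 < Fintype.card V := Fintype.card_pos_iff.2 ⟨a⟩
  rw [ncard_filter, ncard_filter]
  simp only [Finset.card_univ, smul_eq_mul] at hsum
  exact Nat.eq_of_mul_eq_mul_left hpos hsum

open Finset in
lemma closed_back (C : AssocScheme V) {R : Set (V × V)} (hR : R ∈ C.classes)
    (S : Finset V) (hfwd : ∀ a ∈ S, ∀ b, (a, b) ∈ R → b ∈ S)
    {u w : V} (hw : w ∈ S) (huw : (u, w) ∈ R) : u ∈ S := by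
  classical
  set A := univ.filter (fun p : V × V => p ∈ R ∧ p.2 ∈ S) with hA
  set B := univ.filter (fun p : V × V => p ∈ R ∧ p.1 ∈ S ∧ p.2 ∈ S) with hB
  have hBA : B ⊆ A := by
    intro p hp
    rw [hA, mem_filter]
    rw [hB, mem_filter] at hp
    tauto
  have hcardA : A.card = ∑ y ∈ S, (univ.filter fun x => (x, y) ∈ R).card := by
    rw [hA, Finset.card_filter, ← Finset.univ_product_univ, Finset.sum_product_right]
    have key : ∀ y : V, (∑ x : V, if (x, y) ∈ R ∧ y ∈ S then 1 else 0)
        = if y ∈ S then (univ.filter fun x => (x, y) ∈ R).card else 0 := by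
      intro y
      by_cases hy : y ∈ S
      · simp only [hy, and_true, if_true, Finset.card_filter]
      · simp only [hy, and_false, if_false, Finset.sum_const_zero]
    rw [Finset.sum_congr rfl (fun y _ => key y), Finset.sum_ite_mem, Finset.univ_inter]
  have hBeq : B = univ.filter (fun p : V × V => p ∈ R ∧ p.1 ∈ S) := by
    rw [hB]
    apply Finset.filter_congr
    rintro ⟨a, b⟩ _
    constructor
    · tauto
    · rintro ⟨h1, h2⟩
      exact ⟨h1, h2, hfwd a h2 b h1⟩
  have hcardB : B.card = ∑ x ∈ S, (univ.filter fun y => (x, y) ∈ R).card := by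
    rw [hBeq, Finset.card_filter, ← Finset.univ_product_univ, Finset.sum_product]
    have key : ∀ x : V, (∑ y : V, if (x, y) ∈ R ∧ x ∈ S then 1 else 0)
        = if x ∈ S then (univ.filter fun y => (x, y) ∈ R).card else 0 := by
      intro x
      by_cases hx : x ∈ S
      · simp only [hx, and_true, if_true, Finset.card_filter]
      · simp only [hx, and_false, if_false, Finset.sum_const_zero]
    rw [Finset.sum_congr rfl (fun x _ => key x), Finset.sum_ite_mem, Finset.univ_inter]
  have hAB : A.card ≤ B.card := by
    rw [hcardA, hcardB]
    apply le_of_eq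
    apply Finset.sum_congr rfl
    intro x _
    rw [← ncard_filter, ← ncard_filter]
    calc {y | (y, x) ∈ R}.ncard = {y | (y, w) ∈ R}.ncard := indeg_const C hR x w
      _ = {y | (w, y) ∈ R}.ncard := (deg_eq C hR w).symm
      _ = {y | (x, y) ∈ R}.ncard := outdeg_const C hR w x
  have hABeq : B = A := Finset.eq_of_subset_of_card_le hBA hAB
  have hu : (u, w) ∈ A := by
    rw [hA, mem_filter]
    exact ⟨mem_univ _, huw, hw⟩
  rw [← hABeq, hB, mem_filter] at hu
  exact hu.2.2.1

open Finset in
lemma symm_step (C : AssocScheme V) {R : Set (V × V)} (hR : R ∈ C.classes)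
    {u v : V} (h : (u, v) ∈ R) : (v, u) ∈ gen R := by
  classical
  set S := univ.filter (fun x => (v, x) ∈ gen R) with hS
  have hfwd : ∀ a ∈ S, ∀ b, (a, b) ∈ R → b ∈ S := by
    intro a ha b hab
    rw [hS, mem_filter] at ha
    rw [hS, mem_filter]
    exact ⟨mem_univ _, gen_trans ha.2 (mem_gen_of_mem hab)⟩
  have hv : v ∈ S := by simp [hS, gen_refl]
  have := closed_back C hR S hfwd hv h
  simpa [hS] using this

lemma gen_symm (C : AssocScheme V) {R : Set (V × V)} (hR : R ∈ C.classes)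
    {u v : V} (h : (u, v) ∈ gen R) : (v, u) ∈ gen R := by
  obtain ⟨n, hn⟩ := Set.mem_iUnion.1 h
  clear h
  induction n generalizing u v with
  | zero =>
    have : u = v := hn
    subst this; exact gen_refl R u
  | succ n ih =>
    obtain ⟨x, hx1, hx2⟩ := hn
    exact gen_trans (symm_step C hR hx2) (ih hx1)

end Aux

/-- the basis digraph `(V, R)` of an association scheme is strongly connected iff
the undirected graph `(V, R ∪ Rᵀ)` is connected, iff `⟨R⟩ = V × V`. -/
theorem basis_digraph_strongly_connected_iff {V : Type*} [Fintype V] (C : AssocScheme V)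
    {R : Set (V × V)} (hR : R ∈ C.classes) :
    (StronglyConnected R ↔
      ∀ u v : V, Relation.ReflTransGen (fun a b : V => (a, b) ∈ R ∨ (b, a) ∈ R) u v) ∧
    (StronglyConnected R ↔ gen R = Set.univ) := by
  obtain ⟨⟨e1, e2⟩, heR⟩ := C.nonempty_mem R hR
  -- strong → walk
  have walk_of_pow : ∀ n : ℕ, ∀ u v : V, (u, v) ∈ relPow R n →
      Relation.ReflTransGen (fun a b : V => (a, b) ∈ R ∨ (b, a) ∈ R) u v := by
    intro n
    induction n with
    | zero =>
      intro u v h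
      have : u = v := h
      subst this; exact Relation.ReflTransGen.refl
    | succ n ih =>
      rintro u v ⟨x, hx1, hx2⟩
      exact Relation.ReflTransGen.tail (ih u x hx1) (Or.inl hx2)
  have strong_of_gen : gen R = Set.univ → StronglyConnected R := by
    intro hg u v
    have h1 : (u, e1) ∈ gen R := hg ▸ Set.mem_univ _
    have h2 : (e2, v) ∈ gen R := hg ▸ Set.mem_univ _
    obtain ⟨m, hm⟩ := Set.mem_iUnion.1 h1
    obtain ⟨n, hn⟩ := Set.mem_iUnion.1 h2
    refine ⟨m + 1 + n, by omega, ?_⟩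
    have hmid : (u, e2) ∈ relPow R (m + 1) := ⟨e1, hm, heR⟩
    exact mem_relPow_trans hmid hn
  have gen_of_walk : (∀ u v : V,
      Relation.ReflTransGen (fun a b : V => (a, b) ∈ R ∨ (b, a) ∈ R) u v) →
      gen R = Set.univ := by
    intro h
    ext ⟨u, v⟩
    simp only [Set.mem_univ, iff_true]
    induction h u v with
    | refl => exact gen_refl R u
    | tail _ hstep ih =>
      rcases hstep with h' | h'
      · exact gen_trans ih (mem_gen_of_mem h')
      · exact gen_trans ih (gen_symm C hR (mem_gen_of_mem h'))
  have gen_of_strong : StronglyConnected R → gen R = Set.univ := by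
    intro h
    ext ⟨u, v⟩
    simp only [Set.mem_univ, iff_true]
    obtain ⟨n, _, hn⟩ := h u v
    exact Set.mem_iUnion.2 ⟨n, hn⟩
  refine ⟨⟨?_, fun h => strong_of_gen (gen_of_walk h)⟩,
    ⟨gen_of_strong, strong_of_gen⟩⟩
  intro h u v
  obtain ⟨n, _, hn⟩ := h u v
  exact walk_of_pow n u v hn
end

section
/- Let p be a prime and let C = (V, R) be a primitive association scheme that is a p-scheme. Then C is regular (every basis relation has valency 1), |V| = p, and every non-diagonal basis digraph of C is isomorphic to the directed cycle C⃗^p. -/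
open Set Function

/-!
Around a point u the valencies of the basis relations sum to |V| = |Δ|, a proper power of p,
and each is a power of p because it divides |R| = |V| · d(R); since Δ contributes 1, some
non-diagonal basis relation T has valency 1, hence is the graph of a permutation π.
Intersection numbers show that composing a basis relation with such a thin relation gives a basis
relation again, so every power graph(πⁿ) is a basis relation and their union, the orbit relation
of π, is a scheme equivalence. Primitivity makes π a single cycle on V, and then every basis
relation is some graph(πⁿ). Applied to the powers π^m with m ∣ |V|, m < |V|, the same argument
makes π^m a full cycle although (π^m)^(|V|/m) = 1; hence |V| is prime, so |V| = p.
-/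

open scoped Finset
open Equiv

namespace Equiv.Perm.IsCycleOn

variable {V : Type*} [Fintype V] {σ : Perm V}

theorem pow_apply_eq_pow_apply_of_univ (hσ : σ.IsCycleOn univ) (u : V) {m n : ℕ} :
    (σ ^ m) u = (σ ^ n) u ↔ m ≡ n [MOD Fintype.card V] := by
  have hσ' : σ.IsCycleOn (Finset.univ : Finset V) := by simpa using hσ
  exact hσ'.pow_apply_eq_pow_apply (Finset.mem_univ u)

theorem pow_apply_eq_self_of_univ (hσ : σ.IsCycleOn univ) (u : V) {n : ℕ} :
    (σ ^ n) u = u ↔ Fintype.card V ∣ n := by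
  simpa [Nat.modEq_zero_iff_dvd] using hσ.pow_apply_eq_pow_apply_of_univ u (n := 0)

theorem exists_equiv_zmod [Nonempty V] (hσ : σ.IsCycleOn univ) :
    ∃ e : V ≃ ZMod (Fintype.card V), ∀ v, e (σ v) = e v + 1 := by
  obtain ⟨u⟩ := ‹Nonempty V›
  have : NeZero (Fintype.card V) := ⟨Fintype.card_ne_zero⟩
  let g : ZMod (Fintype.card V) → V := fun k ↦ (σ ^ k.val) u
  have hg_succ : ∀ k, g (k + 1) = σ (g k) := fun k ↦ by
    rw [← Perm.mul_apply, ← pow_succ', hσ.pow_apply_eq_pow_apply_of_univ,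
      ← ZMod.natCast_eq_natCast_iff]
    simp
  have hg_inj : Injective g := fun a b hab ↦ by
    simpa using (ZMod.natCast_eq_natCast_iff _ _ _).2
      ((hσ.pow_apply_eq_pow_apply_of_univ u).1 hab)
  let e := (Equiv.ofBijective g ((Fintype.bijective_iff_injective_and_card g).2
    ⟨hg_inj, ZMod.card _⟩)).symm
  refine ⟨e, fun v ↦ e.symm.injective ?_⟩
  change e.symm (e (σ v)) = g (e v + 1)
  rw [hg_succ, Equiv.symm_apply_apply]
  exact congrArg σ (e.symm_apply_apply v).symm

end Equiv.Perm.IsCycleOn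

section Relations

variable {V : Type*}

theorem neighb_diag (u : V) : neighb (diag V) u = {u} := by
  ext v; simp [neighb, diag, eq_comm]

theorem ncard_diag [Fintype V] : (diag V).ncard = Fintype.card V := by
  rw [show diag V = range fun u : V ↦ (u, u) by ext ⟨u, v⟩; simp [diag, eq_comm],
    Set.ncard_range_of_injective fun _ _ h ↦ congrArg Prod.fst h, Nat.card_eq_fintype_card]

theorem ncard_transp (R : Set (V × V)) : (transp R).ncard = R.ncard := by
  rw [show transp R = Prod.swap '' R from congrFun Set.image_swap_eq_preimage_swap.symm R,
    Set.ncard_image_of_injective _ Prod.swap_injective]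

theorem neighb_graph (f : V → V) (u : V) : neighb (graph f) u = {f u} := by
  ext v; simp [neighb, eq_comm]

theorem graph_eq_diag_iff {π : Perm V} : graph ⇑π = diag V ↔ π = 1 := by
  rw [show diag V = graph ⇑(1 : Perm V) by ext ⟨u, v⟩; simp [diag], graph_inj,
    DFunLike.coe_fn_eq]

theorem comp_graph (f g : V → V) : comp (graph f) (graph g) = graph (g ∘ f) := by
  ext ⟨u, v⟩
  constructor
  · rintro ⟨_, rfl, hv⟩
    exact hv
  · rintro rfl
    exact ⟨f u, rfl, rfl⟩

theorem relPow_graph (π : Perm V) (n : ℕ) : relPow (graph ⇑π) n = graph ⇑(π ^ n) := by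
  induction n with
  | zero => exact (graph_eq_diag_iff.2 rfl).symm
  | succ n ih => rw [relPow, ih, comp_graph, pow_succ', Perm.coe_mul]

theorem mem_gen_graph_iff [Finite V] {π : Perm V} {u v : V} :
    (u, v) ∈ gen (graph ⇑π) ↔ π.SameCycle u v := by
  simp only [gen, mem_iUnion, relPow_graph, mem_graph]
  exact ⟨fun ⟨n, h⟩ ↦ ⟨n, by simpa using h⟩, Perm.SameCycle.exists_nat_pow_eq⟩

end Relations

namespace AssocScheme

variable {V : Type*} [Fintype V] (C : AssocScheme V)

def IsPrimitive : Prop :=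
  ∀ E : Set (V × V), IsSchemeEquiv C E → E = diag V ∨ E = univ

noncomputable def classOf (x : V × V) : Set (V × V) :=
  (C.part x).exists.choose

theorem classOf_mem_classes (x : V × V) : C.classOf x ∈ C.classes :=
  (C.part x).exists.choose_spec.1

theorem mem_classOf (x : V × V) : x ∈ C.classOf x :=
  (C.part x).exists.choose_spec.2

variable {C}

theorem eq_of_mem_of_mem {R S : Set (V × V)} (hR : R ∈ C.classes) (hS : S ∈ C.classes)
    {x : V × V} (hxR : x ∈ R) (hxS : x ∈ S) : R = S :=
  (C.part x).unique ⟨hR, hxR⟩ ⟨hS, hxS⟩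

theorem classOf_eq {R : Set (V × V)} (hR : R ∈ C.classes) {x : V × V} (hx : x ∈ R) :
    C.classOf x = R :=
  eq_of_mem_of_mem (C.classOf_mem_classes x) hR (C.mem_classOf x) hx

theorem classOf_eq_iff {R : Set (V × V)} (hR : R ∈ C.classes) {x : V × V} :
    C.classOf x = R ↔ x ∈ R :=
  ⟨fun h ↦ h ▸ C.mem_classOf x, classOf_eq hR⟩

theorem ncard_neighb_eq {R : Set (V × V)} (hR : R ∈ C.classes) (u v : V) :
    (neighb R u).ncard = (neighb R v).ncard := by
  have key : ∀ w : V, {z : V | (w, z) ∈ R ∧ (z, w) ∈ transp R} = neighb R w := fun w ↦ by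
    ext z; simp [transp, neighb]
  simpa only [key] using
    C.inter R hR (transp R) (C.transp_mem R hR) (diag V) C.diag_mem (u, u) rfl (v, v) rfl

theorem ncard_eq_card_mul_ncard_neighb {R : Set (V × V)} (hR : R ∈ C.classes) (u : V) :
    R.ncard = Fintype.card V * (neighb R u).ncard := by
  classical
  have fiber : ∀ w : V, #{x ∈ R.toFinset | x.1 = w} = (neighb R u).ncard := fun w ↦ by
    rw [← ncard_neighb_eq hR w u, ← Set.ncard_image_of_injective _ (Prod.mk_right_injective w),
      ← Set.ncard_coe_finset]
    congr 1
    ext ⟨a, b⟩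
    simp only [Finset.coe_filter, Set.mem_toFinset, Set.mem_ofPred_eq, Set.mem_image, neighb]
    grind
  rw [Set.ncard_eq_toFinset_card', Finset.card_eq_sum_card_fiberwise (f := Prod.fst)
    (t := Finset.univ) (fun _ _ ↦ Finset.mem_coe.2 (Finset.mem_univ _))]
  simp [fiber]

theorem ncard_neighb_transp {R : Set (V × V)} (hR : R ∈ C.classes) (u : V) :
    (neighb (transp R) u).ncard = (neighb R u).ncard := by
  have hpos : 0 < Fintype.card V := Fintype.card_pos_iff.2 ⟨u⟩
  have h := ncard_eq_card_mul_ncard_neighb (C.transp_mem R hR) u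
  rw [ncard_transp, ncard_eq_card_mul_ncard_neighb hR u] at h
  exact (Nat.eq_of_mul_eq_mul_left hpos h).symm

theorem sum_ncard_neighb [DecidableEq (Set (V × V))] (u : V) :
    ∑ R ∈ Finset.univ.image (fun v ↦ C.classOf (u, v)), (neighb R u).ncard =
      Fintype.card V := by
  rw [← Finset.card_univ, Finset.card_eq_sum_card_image (fun v ↦ C.classOf (u, v))]
  refine Finset.sum_congr rfl fun R hR ↦ ?_
  obtain ⟨v, -, rfl⟩ := Finset.mem_image.1 hR
  rw [← Set.ncard_coe_finset]
  congr 1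
  ext w
  simp [neighb, classOf_eq_iff (C.classOf_mem_classes (u, v))]

theorem exists_ncard_neighb_eq_pow {p : ℕ} (hp : p.Prime) (hps : IsPScheme p C)
    {R : Set (V × V)} (hR : R ∈ C.classes) (u : V) : ∃ j, (neighb R u).ncard = p ^ j := by
  obtain ⟨k, hk⟩ := hps R hR
  obtain ⟨j, -, hj⟩ := (Nat.dvd_prime_pow hp).1
    (Dvd.intro_left _ (hk ▸ (ncard_eq_card_mul_ncard_neighb hR u).symm))
  exact ⟨j, hj⟩

theorem exists_thin_class_of_isPScheme {p : ℕ} (hp : p.Prime) (hcard : 2 ≤ Fintype.card V)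
    (hps : IsPScheme p C) :
    ∃ T ∈ C.classes, T ≠ diag V ∧ ∀ u, (neighb T u).ncard = 1 := by
  classical
  obtain ⟨u⟩ : Nonempty V := Fintype.card_pos_iff.1 (by omega)
  have hpV : p ∣ Fintype.card V := by
    obtain ⟨m, hm⟩ := hps _ C.diag_mem
    rw [ncard_diag] at hm
    rcases m with _ | m
    · simp at hm; omega
    · exact hm ▸ dvd_pow_self p m.succ_ne_zero
  by_contra! hnone
  set F := Finset.univ.image fun v ↦ C.classOf (u, v)
  have hdiag : diag V ∈ F :=
    Finset.mem_image.2 ⟨u, Finset.mem_univ _, classOf_eq C.diag_mem rfl⟩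
  have hrest : p ∣ ∑ R ∈ F.erase (diag V), (neighb R u).ncard := by
    refine Finset.dvd_sum fun R hRF ↦ ?_
    obtain ⟨hRd, hRF⟩ := Finset.mem_erase.1 hRF
    obtain ⟨v, -, rfl⟩ := Finset.mem_image.1 hRF
    have hR := C.classOf_mem_classes (u, v)
    obtain ⟨w, hw⟩ := hnone _ hR hRd
    obtain ⟨j, hj⟩ := exists_ncard_neighb_eq_pow hp hps hR u
    rw [ncard_neighb_eq hR w u, hj] at hw
    exact hj ▸ dvd_pow_self p (by rintro rfl; exact hw rfl)
  have hsum := Finset.add_sum_erase F (fun R ↦ (neighb R u).ncard) hdiag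
  rw [sum_ncard_neighb, neighb_diag, Set.ncard_singleton] at hsum
  exact hp.one_lt.ne' (Nat.dvd_one.1 ((Nat.dvd_add_right hrest).1 (by rwa [add_comm, hsum])))

theorem exists_perm_of_thin {T : Set (V × V)} (hT : T ∈ C.classes)
    (hthin : ∀ u, (neighb T u).ncard = 1) : ∃ π : Perm V, T = graph ⇑π := by
  choose σ hσ using fun u ↦ Set.ncard_eq_one.1 (hthin u)
  have hTσ : T = graph σ := by
    ext ⟨u, v⟩
    rw [mem_graph, eq_comm, ← Set.mem_singleton_iff, ← hσ u]
    rfl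
  have hσ_inj : Injective σ := fun a b hab ↦ by
    obtain ⟨w, hw⟩ := Set.ncard_eq_one.1
      ((ncard_neighb_transp hT (σ a)).trans (hthin (σ a)))
    have ha : a ∈ neighb (transp T) (σ a) := by simp [neighb, transp, hTσ]
    have hb : b ∈ neighb (transp T) (σ a) := by simp [neighb, transp, hTσ, hab]
    rw [hw] at ha hb
    exact ha.trans hb.symm
  exact ⟨Equiv.ofBijective σ (Finite.injective_iff_bijective.1 hσ_inj), hTσ⟩

theorem subset_comp_of_inter_nonempty {R S W : Set (V × V)} (hR : R ∈ C.classes)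
    (hS : S ∈ C.classes) (hW : W ∈ C.classes) (h : (W ∩ comp R S).Nonempty) :
    W ⊆ comp R S := by
  obtain ⟨x, hxW, w, hw⟩ := h
  intro y hyW
  have hcount := C.inter R hR S hS W hW x hxW y hyW
  have hx : {w | (x.1, w) ∈ R ∧ (w, x.2) ∈ S}.ncard ≠ 0 :=
    (Set.ncard_pos (Set.toFinite _)).2 ⟨w, hw⟩ |>.ne'
  exact Set.nonempty_of_ncard_ne_zero (hcount ▸ hx)

theorem comp_graph_mem_classes {S : Set (V × V)} (hS : S ∈ C.classes) {π : Perm V}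
    (hπ : graph ⇑π ∈ C.classes) : comp S (graph ⇑π) ∈ C.classes := by
  obtain ⟨⟨a, b⟩, hab⟩ := C.nonempty_mem S hS
  set U := C.classOf (a, π b)
  have hU : U ∈ C.classes := C.classOf_mem_classes _
  have hU_sub : U ⊆ comp S (graph ⇑π) :=
    subset_comp_of_inter_nonempty hS hπ hU ⟨_, C.mem_classOf _, b, hab, rfl⟩
  have hS_sub : S ⊆ comp U (transp (graph ⇑π)) :=
    subset_comp_of_inter_nonempty hU (C.transp_mem _ hπ) hS
      ⟨_, hab, π b, C.mem_classOf _, rfl⟩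
  suffices comp S (graph ⇑π) = U from this ▸ hU
  refine Subset.antisymm ?_ hU_sub
  rintro ⟨x, z⟩ ⟨y, hxy, rfl : π y = z⟩
  obtain ⟨w, hxw, rfl : π y = w⟩ := hS_sub hxy
  exact hxw

theorem graph_pow_mem_classes {π : Perm V} (hπ : graph ⇑π ∈ C.classes) (n : ℕ) :
    graph ⇑(π ^ n) ∈ C.classes := by
  induction n with
  | zero => exact graph_eq_diag_iff.2 rfl ▸ C.diag_mem
  | succ n ih =>
    rw [← relPow_graph, relPow, relPow_graph]
    exact comp_graph_mem_classes ih hπ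

theorem isSchemeEquiv_gen_graph {π : Perm V} (hπ : graph ⇑π ∈ C.classes) :
    IsSchemeEquiv C (gen (graph ⇑π)) := by
  refine ⟨⟨range (relPow (graph ⇑π)), ?_, (sUnion_range _).symm⟩, ?_⟩
  · rintro _ ⟨n, rfl⟩
    exact relPow_graph π n ▸ graph_pow_mem_classes hπ n
  · simpa only [mem_gen_graph_iff] using Perm.SameCycle.equivalence π

theorem isCycleOn_univ_of_primitive (hprim : C.IsPrimitive) {π : Perm V}
    (hπ : graph ⇑π ∈ C.classes) (hπ1 : π ≠ 1) : π.IsCycleOn univ := by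
  rcases hprim _ (isSchemeEquiv_gen_graph hπ) with hdiag | huniv
  · refine absurd (Equiv.ext fun u ↦ ?_) hπ1
    have : (u, π u) ∈ gen (graph ⇑π) :=
      mem_gen_graph_iff.2 (Perm.sameCycle_apply_right.2 .rfl)
    rw [hdiag] at this
    exact this.symm
  · exact ⟨π.bijective.bijOn_univ, fun u _ v _ ↦
      mem_gen_graph_iff.1 (huniv ▸ mem_univ (u, v))⟩

theorem eq_graph_pow_of_isCycleOn {π : Perm V} (hπ : graph ⇑π ∈ C.classes)
    (hcyc : π.IsCycleOn univ) {R : Set (V × V)} (hR : R ∈ C.classes) :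
    ∃ n : ℕ, R = graph ⇑(π ^ n) := by
  obtain ⟨⟨a, b⟩, hab⟩ := C.nonempty_mem R hR
  obtain ⟨n, hn⟩ := hcyc.exists_pow_eq' finite_univ (mem_univ a) (mem_univ b)
  exact ⟨n, eq_of_mem_of_mem hR (graph_pow_mem_classes hπ n) hab hn⟩

theorem card_prime_of_primitive (hprim : C.IsPrimitive) {π : Perm V}
    (hπ : graph ⇑π ∈ C.classes) (hπ1 : π ≠ 1) : (Fintype.card V).Prime := by
  set n := Fintype.card V
  have hcyc := isCycleOn_univ_of_primitive hprim hπ hπ1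
  have htwo : 2 ≤ n := by
    by_contra! h
    have := Fintype.card_le_one_iff_subsingleton.1 (Nat.le_of_lt_succ h)
    exact hπ1 (Subsingleton.elim _ _)
  obtain ⟨u⟩ : Nonempty V := Fintype.card_pos_iff.1 (by omega)
  refine Nat.prime_def.2 ⟨htwo, fun m hm ↦ or_iff_not_imp_right.2 fun hmn ↦ ?_⟩
  have hπm : π ^ m ≠ 1 := fun h ↦
    hmn (Nat.dvd_antisymm hm ((hcyc.pow_apply_eq_self_of_univ u).1 (by simp [h])))
  have hcyc_m := isCycleOn_univ_of_primitive hprim (graph_pow_mem_classes hπ m) hπm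
  have hdvd : n ∣ n / m := by
    rw [← hcyc_m.pow_apply_eq_self_of_univ u, ← pow_mul, Nat.mul_div_cancel' hm,
      hcyc.pow_apply_eq_self_of_univ]
  have hmul := Nat.mul_div_cancel' hm
  rw [Nat.dvd_antisymm (Nat.div_dvd_of_dvd hm) hdvd] at hmul
  exact Nat.eq_of_mul_eq_mul_right (by omega) (hmul.trans (one_mul n).symm)

end AssocScheme

/-- a primitive association scheme which is a `p`-scheme is regular on `p` points,
and every non-diagonal basis digraph is isomorphic to the directed cycle on `p` vertices. -/
theorem primitive_pScheme {V : Type*} [Fintype V] {p : ℕ} (hp : p.Prime)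
    (C : AssocScheme V) (hcard : 2 ≤ Fintype.card V)
    (hprim : ∀ E : Set (V × V), IsSchemeEquiv C E → E = diag V ∨ E = Set.univ)
    (hps : IsPScheme p C) :
    (∀ R ∈ C.classes, ∀ u : V, (neighb R u).ncard = 1) ∧
    Fintype.card V = p ∧
    (∀ R ∈ C.classes, R ≠ diag V →
      ∃ e : V ≃ ZMod p, ∀ u v : V, (u, v) ∈ R ↔ e v = e u + 1) := by
  obtain ⟨T, hT, hTd, hthin⟩ := AssocScheme.exists_thin_class_of_isPScheme hp hcard hps
  obtain ⟨π, rfl⟩ := AssocScheme.exists_perm_of_thin hT hthin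
  have hπ1 : π ≠ 1 := mt graph_eq_diag_iff.2 hTd
  have hcyc := AssocScheme.isCycleOn_univ_of_primitive hprim hT hπ1
  have hV : Fintype.card V = p := by
    obtain ⟨m, hm⟩ := hps _ C.diag_mem
    rw [ncard_diag] at hm
    exact ((AssocScheme.card_prime_of_primitive hprim hT hπ1).pow_eq_iff.1 hm.symm).1.symm
  refine ⟨fun R hR u ↦ ?_, hV, fun R hR hRd ↦ ?_⟩
  · obtain ⟨n, rfl⟩ := AssocScheme.eq_graph_pow_of_isCycleOn hT hcyc hR
    rw [neighb_graph, ncard_singleton]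
  · obtain ⟨n, rfl⟩ := AssocScheme.eq_graph_pow_of_isCycleOn hT hcyc hR
    have : Nonempty V := Fintype.card_pos_iff.1 (by omega)
    obtain ⟨e, he⟩ := (AssocScheme.isCycleOn_univ_of_primitive hprim hR
      (mt graph_eq_diag_iff.2 hRd)).exists_equiv_zmod
    subst hV
    exact ⟨e, fun u v ↦ by rw [mem_graph, ← he, e.apply_eq_iff_eq, eq_comm]⟩
end

section
/- Let p be a prime, C an association scheme, E a scheme equivalence of C, and X a class of E. Then C is a p-scheme if and only if both the quotient scheme C_{V/E} and the restricted scheme C_X are p-schemes. -/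
open Set Function

section Aux
attribute [local instance] Classical.propDecidable

open Finset

variable {V : Type*} [Fintype V]

lemma ncard_eq_sum_ite {α : Type*} [Fintype α] (S : Set α) :
    S.ncard = ∑ a : α, if a ∈ S then 1 else 0 := by
  classical
  rw [Set.ncard_eq_toFinset_card']
  rw [show S.toFinset = Finset.univ.filter (· ∈ S) by ext a; simp]
  rw [Finset.card_filter]

lemma ncard_partition {α : Type*} [Fintype α] (S : Set α) (P : Set (Set α))
    (hdis : ∀ A ∈ P, ∀ B ∈ P, A ≠ B → A ∩ B = ∅)
    (hcov : S ⊆ ⋃₀ P) (c : ℕ) (hc : ∀ A ∈ P, (S ∩ A).ncard = c) :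
    S.ncard = P.ncard * c := by
  classical
  have key : ∀ a : α, (if a ∈ S then 1 else 0)
      = ∑ A ∈ P.toFinite.toFinset, (if a ∈ S ∩ A then 1 else 0) := by
    intro a
    by_cases haS : a ∈ S
    · obtain ⟨A₀, hA₀P, haA₀⟩ := hcov haS
      rw [Finset.sum_eq_single A₀]
      · simp [haS, haA₀]
      · intro B hB hne
        have hBP : B ∈ P := P.toFinite.mem_toFinset.mp hB
        have : a ∉ B := by
          intro haB
          have := hdis B hBP A₀ hA₀P hne
          exact absurd (Set.mem_inter haB haA₀) (by rw [this]; exact id)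
        simp [this]
      · intro h; exact absurd (P.toFinite.mem_toFinset.mpr hA₀P) h
    · simp only [haS, if_false]
      refine (Finset.sum_eq_zero ?_).symm
      intro B _; simp [haS]
  calc S.ncard = ∑ a : α, if a ∈ S then 1 else 0 := ncard_eq_sum_ite S
    _ = ∑ a : α, ∑ A ∈ P.toFinite.toFinset, (if a ∈ S ∩ A then 1 else 0) :=
        Finset.sum_congr rfl (fun a _ => key a)
    _ = ∑ A ∈ P.toFinite.toFinset, ∑ a : α, (if a ∈ S ∩ A then 1 else 0) := Finset.sum_comm
    _ = ∑ A ∈ P.toFinite.toFinset, (S ∩ A).ncard := by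
        refine Finset.sum_congr rfl (fun A _ => ?_)
        rw [ncard_eq_sum_ite]
        exact Finset.sum_congr rfl fun a _ => by congr
    _ = ∑ A ∈ P.toFinite.toFinset, c :=
        Finset.sum_congr rfl (fun A hA => hc A (P.toFinite.mem_toFinset.mp hA))
    _ = P.toFinite.toFinset.card * c := by rw [Finset.sum_const, smul_eq_mul]
    _ = P.ncard * c := by rw [Set.ncard_eq_toFinset_card P P.toFinite]

end Aux
namespace AssocScheme

variable {V : Type*} [Fintype V] (C : AssocScheme V)

noncomputable def cls (z : V × V) : Set (V × V) := (C.part z).exists.choose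

lemma cls_mem_classes (z : V × V) : C.cls z ∈ C.classes := (C.part z).exists.choose_spec.1

lemma mem_cls (z : V × V) : z ∈ C.cls z := (C.part z).exists.choose_spec.2

variable {C}

lemma cls_eq {R : Set (V × V)} (hR : R ∈ C.classes) {z : V × V} (hz : z ∈ R) : C.cls z = R :=
  (C.part z).unique ⟨C.cls_mem_classes z, C.mem_cls z⟩ ⟨hR, hz⟩

lemma class_eq_class {R S : Set (V × V)} (hR : R ∈ C.classes) (hS : S ∈ C.classes)
    {z : V × V} (hzR : z ∈ R) (hzS : z ∈ S) : R = S := by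
  rw [← cls_eq hR hzR, cls_eq hS hzS]

lemma class_disjoint {R S : Set (V × V)} (hR : R ∈ C.classes) (hS : S ∈ C.classes)
    (hne : R ≠ S) : R ∩ S = ∅ := by
  by_contra h
  obtain ⟨z, hz⟩ := Set.nonempty_iff_ne_empty.mpr h
  exact hne (class_eq_class hR hS hz.1 hz.2)

/-- intersection counting function -/
noncomputable def icnt (R S : Set (V × V)) (x y : V) : ℕ :=
  {w | (x, w) ∈ R ∧ (w, y) ∈ S}.ncard

/-- triple counting function -/
noncomputable def tcnt (F R G : Set (V × V)) (x y : V) : ℕ :=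
  {q : V × V | (x, q.1) ∈ F ∧ (q.1, q.2) ∈ R ∧ (q.2, y) ∈ G}.ncard

lemma icnt_cconst {R S T : Set (V × V)} (hR : R ∈ C.classes) (hS : S ∈ C.classes)
    (hT : T ∈ C.classes) {x y x' y' : V} (h1 : (x, y) ∈ T) (h2 : (x', y') ∈ T) :
    icnt R S x y = icnt R S x' y' :=
  C.inter R hR S hS T hT (x, y) h1 (x', y') h2

lemma mem_comp_iff_icnt_pos {R S : Set (V × V)} {x y : V} :
    (x, y) ∈ comp R S ↔ 0 < icnt R S x y := by
  rw [icnt, Set.ncard_pos (Set.toFinite _)]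
  exact Iff.rfl

lemma basis_subset_comp {R S T : Set (V × V)} (hR : R ∈ C.classes) (hS : S ∈ C.classes)
    (hT : T ∈ C.classes) (h : (T ∩ comp R S).Nonempty) : T ⊆ comp R S := by
  obtain ⟨⟨a, b⟩, haT, hacomp⟩ := h
  intro ⟨x, y⟩ hxy
  rw [mem_comp_iff_icnt_pos]
  rw [icnt_cconst hR hS hT hxy haT]
  exact mem_comp_iff_icnt_pos.mp hacomp

section SumLemmas

/-- classical indicator -/
noncomputable def cind (P : Prop) : ℕ := @ite ℕ P (Classical.propDecidable P) 1 0

lemma cind_pos {P : Prop} (h : P) : cind P = 1 := if_pos h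

lemma cind_neg {P : Prop} (h : ¬ P) : cind P = 0 := if_neg h

lemma cind_congr {P Q : Prop} (h : P ↔ Q) : cind P = cind Q := by
  by_cases hp : P
  · rw [cind_pos hp, cind_pos (h.mp hp)]
  · rw [cind_neg hp, cind_neg (fun q => hp (h.mpr q))]

lemma cind_mul (P Q : Prop) : cind P * cind Q = cind (P ∧ Q) := by
  by_cases hp : P
  · by_cases hq : Q
    · rw [cind_pos hp, cind_pos hq, cind_pos ⟨hp, hq⟩, one_mul]
    · rw [cind_pos hp, cind_neg hq, mul_zero, cind_neg (fun h : P ∧ Q => hq h.2)]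
  · rw [cind_neg hp, zero_mul, cind_neg (fun h : P ∧ Q => hp h.1)]

lemma ncard_eq_sum_cind {α : Type*} [Fintype α] (S : Set α) :
    S.ncard = ∑ a : α, cind (a ∈ S) := by
  classical
  rw [ncard_eq_sum_ite]
  refine Finset.sum_congr rfl fun a _ => ?_
  unfold cind
  congr

lemma cind_sUnion {D : Set (Set (V × V))} (hD : D ⊆ C.classes) (z : V × V) :
    cind (z ∈ ⋃₀ D) = ∑ f ∈ D.toFinite.toFinset, cind (z ∈ f) := by
  by_cases hz : z ∈ ⋃₀ D
  · rw [cind_pos hz]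
    obtain ⟨f₀, hf₀D, hzf₀⟩ := hz
    rw [Finset.sum_eq_single f₀]
    · rw [cind_pos hzf₀]
    · intro g hg hgne
      have hgD : g ∈ D := D.toFinite.mem_toFinset.mp hg
      exact cind_neg (fun hzg => hgne (class_eq_class (hD hgD) (hD hf₀D) hzg hzf₀))
    · intro h; exact absurd (D.toFinite.mem_toFinset.mpr hf₀D) h
  · rw [cind_neg hz]
    refine (Finset.sum_eq_zero ?_).symm
    intro g hg
    exact cind_neg (fun hzg => hz ⟨g, D.toFinite.mem_toFinset.mp hg, hzg⟩)

lemma eq_sum_classes (C : AssocScheme V) (z : V × V) (m : ℕ) :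
    m = ∑ s ∈ C.classes.toFinite.toFinset, cind (z ∈ s) * m := by
  have h1 : cind (z ∈ ⋃₀ C.classes) = 1 :=
    cind_pos ⟨C.cls z, C.cls_mem_classes z, C.mem_cls z⟩
  calc m = cind (z ∈ ⋃₀ C.classes) * m := by rw [h1, one_mul]
    _ = (∑ s ∈ C.classes.toFinite.toFinset, cind (z ∈ s)) * m := by
        rw [cind_sUnion (le_refl C.classes)]
    _ = ∑ s ∈ C.classes.toFinite.toFinset, cind (z ∈ s) * m := by rw [Finset.sum_mul]

lemma icnt_eq_sum_cind (R S : Set (V × V)) (x y : V) :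
    icnt R S x y = ∑ w : V, cind ((x, w) ∈ R ∧ (w, y) ∈ S) := by
  rw [icnt, ncard_eq_sum_cind]
  exact Finset.sum_congr rfl fun w _ => rfl

lemma icnt_sUnion_left {D : Set (Set (V × V))} (hD : D ⊆ C.classes) (S : Set (V × V))
    (x y : V) : icnt (⋃₀ D) S x y = ∑ f ∈ D.toFinite.toFinset, icnt f S x y := by
  rw [icnt_eq_sum_cind]
  have key : ∀ w : V, cind ((x, w) ∈ ⋃₀ D ∧ (w, y) ∈ S)
      = ∑ f ∈ D.toFinite.toFinset, cind ((x, w) ∈ f ∧ (w, y) ∈ S) := by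
    intro w
    rw [← cind_mul, cind_sUnion hD, Finset.sum_mul]
    exact Finset.sum_congr rfl fun f _ => cind_mul _ _
  rw [Finset.sum_congr rfl (fun w _ => key w), Finset.sum_comm]
  exact Finset.sum_congr rfl fun f _ => (icnt_eq_sum_cind f S x y).symm

lemma icnt_sUnion_right {D : Set (Set (V × V))} (hD : D ⊆ C.classes) (S : Set (V × V))
    (x y : V) : icnt S (⋃₀ D) x y = ∑ f ∈ D.toFinite.toFinset, icnt S f x y := by
  rw [icnt_eq_sum_cind]
  have key : ∀ w : V, cind ((x, w) ∈ S ∧ (w, y) ∈ ⋃₀ D)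
      = ∑ f ∈ D.toFinite.toFinset, cind ((x, w) ∈ S ∧ (w, y) ∈ f) := by
    intro w
    have comm : ∀ T : Set (V × V), cind ((x, w) ∈ S ∧ (w, y) ∈ T)
        = cind ((w, y) ∈ T) * cind ((x, w) ∈ S) := by
      intro T; rw [cind_mul]; exact cind_congr (by tauto)
    rw [comm, cind_sUnion hD, Finset.sum_mul]
    exact Finset.sum_congr rfl fun f _ => (comm f).symm
  rw [Finset.sum_congr rfl (fun w _ => key w), Finset.sum_comm]
  exact Finset.sum_congr rfl fun f _ => (icnt_eq_sum_cind S f x y).symm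

lemma icnt_sUnion_left_cconst {D : Set (Set (V × V))} (hD : D ⊆ C.classes)
    {S T : Set (V × V)} (hS : S ∈ C.classes) (hT : T ∈ C.classes)
    {x y x' y' : V} (h1 : (x, y) ∈ T) (h2 : (x', y') ∈ T) :
    icnt (⋃₀ D) S x y = icnt (⋃₀ D) S x' y' := by
  rw [icnt_sUnion_left hD, icnt_sUnion_left hD]
  refine Finset.sum_congr rfl (fun f hf => ?_)
  exact icnt_cconst (hD (D.toFinite.mem_toFinset.mp hf)) hS hT h1 h2

lemma icnt_sUnion_right_cconst {D : Set (Set (V × V))} (hD : D ⊆ C.classes)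
    {S T : Set (V × V)} (hS : S ∈ C.classes) (hT : T ∈ C.classes)
    {x y x' y' : V} (h1 : (x, y) ∈ T) (h2 : (x', y') ∈ T) :
    icnt S (⋃₀ D) x y = icnt S (⋃₀ D) x' y' := by
  rw [icnt_sUnion_right hD, icnt_sUnion_right hD]
  refine Finset.sum_congr rfl (fun f hf => ?_)
  exact icnt_cconst hS (hD (D.toFinite.mem_toFinset.mp hf)) hT h1 h2

noncomputable def crep (C : AssocScheme V) (s : Set (V × V)) : V × V :=
  @dite _ s.Nonempty (Classical.propDecidable _) (fun h => h.some)
    (fun _ => (C.nonempty_mem _ C.diag_mem).some)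

lemma crep_mem {s : Set (V × V)} (h : s.Nonempty) : C.crep s ∈ s := by
  unfold crep
  rw [dif_pos h]
  exact h.some_mem

/-- The key constancy lemma: the two-sided composition count with unions of classes on both
sides is constant on basis relations. -/
lemma tcnt_cconst {D D' : Set (Set (V × V))} (hD : D ⊆ C.classes) (hD' : D' ⊆ C.classes)
    {r T : Set (V × V)} (hr : r ∈ C.classes) (hT : T ∈ C.classes)
    {x y x' y' : V} (h1 : (x, y) ∈ T) (h2 : (x', y') ∈ T) :
    tcnt (⋃₀ D) r (⋃₀ D') x y = tcnt (⋃₀ D) r (⋃₀ D') x' y' := by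
  have formula : ∀ a b : V, tcnt (⋃₀ D) r (⋃₀ D') a b
      = ∑ s ∈ C.classes.toFinite.toFinset,
          (icnt (⋃₀ D) r (C.crep s).1 (C.crep s).2) * icnt s (⋃₀ D') a b := by
    intro a b
    have stepA : tcnt (⋃₀ D) r (⋃₀ D') a b
        = ∑ w' : V, (icnt (⋃₀ D) r a w') * cind ((w', b) ∈ ⋃₀ D') := by
      rw [tcnt, ncard_eq_sum_cind, Fintype.sum_prod_type, Finset.sum_comm]
      refine Finset.sum_congr rfl (fun w' _ => ?_)
      rw [icnt_eq_sum_cind, Finset.sum_mul]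
      refine Finset.sum_congr rfl (fun w _ => ?_)
      rw [cind_mul]
      exact cind_congr (by simp only [Set.mem_setOf_eq]; tauto)
    rw [stepA]
    have stepP : ∀ w' : V, (icnt (⋃₀ D) r a w') * cind ((w', b) ∈ ⋃₀ D')
        = ∑ s ∈ C.classes.toFinite.toFinset,
            cind ((a, w') ∈ s) *
              ((icnt (⋃₀ D) r (C.crep s).1 (C.crep s).2) * cind ((w', b) ∈ ⋃₀ D')) := by
      intro w'
      rw [eq_sum_classes C (a, w') ((icnt (⋃₀ D) r a w') * cind ((w', b) ∈ ⋃₀ D'))]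
      refine Finset.sum_congr rfl (fun s hs => ?_)
      by_cases hmem : (a, w') ∈ s
      · rw [cind_pos hmem, one_mul, one_mul]
        have hsC : s ∈ C.classes := C.classes.toFinite.mem_toFinset.mp hs
        have hcr : ((C.crep s).1, (C.crep s).2) ∈ s := by
          rw [Prod.mk.eta]; exact crep_mem (C.nonempty_mem s hsC)
        rw [icnt_sUnion_left_cconst hD hr hsC hmem hcr]
      · rw [cind_neg hmem, zero_mul, zero_mul]
    rw [Finset.sum_congr rfl (fun w' _ => stepP w'), Finset.sum_comm]
    refine Finset.sum_congr rfl (fun s _ => ?_)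
    have inner : ∀ w' : V,
        cind ((a, w') ∈ s) *
            ((icnt (⋃₀ D) r (C.crep s).1 (C.crep s).2) * cind ((w', b) ∈ ⋃₀ D'))
        = (icnt (⋃₀ D) r (C.crep s).1 (C.crep s).2)
            * cind ((a, w') ∈ s ∧ (w', b) ∈ ⋃₀ D') := by
      intro w'
      rw [← cind_mul]; ring
    rw [Finset.sum_congr rfl (fun w' _ => inner w'), ← Finset.mul_sum]
    congr 1
    rw [icnt_eq_sum_cind]
  rw [formula x y, formula x' y']
  refine Finset.sum_congr rfl (fun s hs => ?_)
  congr 1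
  exact icnt_sUnion_right_cconst hD' (C.classes.toFinite.mem_toFinset.mp hs) hT h1 h2

end SumLemmas

end AssocScheme
namespace AssocScheme

set_option linter.unusedSectionVars false

variable {V : Type*} [Fintype V] {C : AssocScheme V}

lemma prod_inter_empty_left {α : Type*} {Y Y' Z Z' : Set α} (h : Y ∩ Y' = ∅) :
    (Y ×ˢ Z) ∩ (Y' ×ˢ Z') = ∅ := by
  ext ⟨a, b⟩
  simp only [Set.mem_inter_iff, Set.mem_prod, Set.mem_empty_iff_false, iff_false]
  rintro ⟨⟨ha, _⟩, ⟨ha', _⟩⟩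
  have : a ∈ Y ∩ Y' := ⟨ha, ha'⟩
  rw [h] at this
  exact this

lemma prod_inter_empty_right {α : Type*} {Y Y' Z Z' : Set α} (h : Z ∩ Z' = ∅) :
    (Y ×ˢ Z) ∩ (Y' ×ˢ Z') = ∅ := by
  ext ⟨a, b⟩
  simp only [Set.mem_inter_iff, Set.mem_prod, Set.mem_empty_iff_false, iff_false]
  rintro ⟨⟨_, hb⟩, ⟨_, hb'⟩⟩
  have : b ∈ Z ∩ Z' := ⟨hb, hb'⟩
  rw [h] at this
  exact this

/-- The class of `u` under relation `F`. -/
def rcl (F : Set (V × V)) (u : V) : Set V := {v | (u, v) ∈ F}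

lemma mem_rcl_iff {F : Set (V × V)} {u v : V} : v ∈ rcl F u ↔ (u, v) ∈ F := Iff.rfl

variable {F : Set (V × V)}

lemma mem_rcl_self (hF : IsSchemeEquiv C F) (u : V) : u ∈ rcl F u := hF.2.refl u

lemma rcl_eq_of_rel (hF : IsSchemeEquiv C F) {u v : V} (h : (u, v) ∈ F) :
    rcl F u = rcl F v := by
  ext w
  exact ⟨fun hw => hF.2.trans (hF.2.symm h) hw, fun hw => hF.2.trans h hw⟩

lemma rel_of_mem_rcl (hF : IsSchemeEquiv C F) {u v w : V}
    (hv : v ∈ rcl F u) (hw : w ∈ rcl F u) : (v, w) ∈ F :=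
  hF.2.trans (hF.2.symm hv) hw

lemma rcl_mem_classesOf (u : V) : rcl F u ∈ classesOf F := ⟨u, rfl⟩

lemma classesOf_eq_rcl (hF : IsSchemeEquiv C F) {Y : Set V} (hY : Y ∈ classesOf F)
    {v : V} (hv : v ∈ Y) : Y = rcl F v := by
  obtain ⟨u, rfl⟩ := hY
  exact rcl_eq_of_rel hF hv

lemma rcl_disjoint (hF : IsSchemeEquiv C F) (u v : V) :
    rcl F u = rcl F v ∨ rcl F u ∩ rcl F v = ∅ := by
  by_cases h : (rcl F u ∩ rcl F v).Nonempty
  · obtain ⟨w, hwu, hwv⟩ := h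
    left
    rw [rcl_eq_of_rel hF (hwu : (u, w) ∈ F), rcl_eq_of_rel hF (hwv : (v, w) ∈ F)]
  · right; exact Set.not_nonempty_iff_eq_empty.mp h

lemma basis_subset_of_inter (hF : IsSchemeEquiv C F) {t : Set (V × V)}
    (ht : t ∈ C.classes) (h : (t ∩ F).Nonempty) : t ⊆ F := by
  obtain ⟨D, hD, rfl⟩ := hF.1
  obtain ⟨z, hzt, f, hfD, hzf⟩ := h
  rw [class_eq_class ht (hD hfD) hzt hzf]
  exact Set.subset_sUnion_of_mem hfD

lemma diag_subset (hF : IsSchemeEquiv C F) : diag V ⊆ F := by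
  intro ⟨a, b⟩ hab
  have : a = b := hab
  rw [← this]
  exact hF.2.refl a

/-- block of `r` as a tcnt -/
lemma block_eq_tcnt (hF : IsSchemeEquiv C F) (r : Set (V × V)) (x y : V) :
    (r ∩ (rcl F x) ×ˢ (rcl F y)).ncard = tcnt F r F x y := by
  congr 1
  ext ⟨w, w'⟩
  simp only [Set.mem_inter_iff, Set.mem_prod, Set.mem_setOf_eq, mem_rcl_iff]
  constructor
  · rintro ⟨h1, h2, h3⟩; exact ⟨h2, h1, hF.2.symm h3⟩
  · rintro ⟨h1, h2, h3⟩; exact ⟨h2, h1, hF.2.symm h3⟩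

lemma blocks_const (hF : IsSchemeEquiv C F) {r : Set (V × V)} (hr : r ∈ C.classes)
    {x y x' y' : V} (h1 : (x, y) ∈ r) (h2 : (x', y') ∈ r) :
    (r ∩ (rcl F x) ×ˢ (rcl F y)).ncard = (r ∩ (rcl F x') ×ˢ (rcl F y')).ncard := by
  rw [block_eq_tcnt hF, block_eq_tcnt hF]
  obtain ⟨D, hD, hFD⟩ := hF.1
  rw [hFD]
  exact tcnt_cconst hD hD hr hr h1 h2

lemma mem_quotRel_of_mem (hF : IsSchemeEquiv C F) {r : Set (V × V)} {x y : V}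
    (hxy : (x, y) ∈ r) : (rcl F x, rcl F y) ∈ quotRel F r :=
  ⟨rcl_mem_classesOf x, rcl_mem_classesOf y,
    ⟨(x, y), hxy, ⟨mem_rcl_self hF x, mem_rcl_self hF y⟩⟩⟩

lemma classes_disjoint' (hF : IsSchemeEquiv C F) {Y Y' : Set V}
    (hY : Y ∈ classesOf F) (hY' : Y' ∈ classesOf F) : Y = Y' ∨ Y ∩ Y' = ∅ := by
  obtain ⟨u, rfl⟩ := hY
  obtain ⟨u', rfl⟩ := hY'
  exact rcl_disjoint hF u u'

lemma block_const' (hF : IsSchemeEquiv C F) {r : Set (V × V)} (hr : r ∈ C.classes)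
    {Y Z : Set V} (hYZ : (Y, Z) ∈ quotRel F r) {x y : V} (hxy : (x, y) ∈ r) :
    (r ∩ Y ×ˢ Z).ncard = (r ∩ (rcl F x) ×ˢ (rcl F y)).ncard := by
  obtain ⟨hY, hZ, hne⟩ := hYZ
  replace hY : Y ∈ classesOf F := hY
  replace hZ : Z ∈ classesOf F := hZ
  obtain ⟨⟨a, b⟩, hab, haY, hbZ⟩ := hne
  replace haY : a ∈ Y := haY
  replace hbZ : b ∈ Z := hbZ
  rw [classesOf_eq_rcl hF hY haY, classesOf_eq_rcl hF hZ hbZ]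
  exact blocks_const hF hr hab hxy

lemma prod_inj_of_nonempty {α : Type*} {Y Z Y' Z' : Set α} (hY : Y.Nonempty) (hZ : Z.Nonempty)
    (h : Y ×ˢ Z = Y' ×ˢ Z') : Y = Y' ∧ Z = Z' := by
  obtain ⟨a, ha⟩ := hY
  obtain ⟨b, hb⟩ := hZ
  have hab : (a, b) ∈ Y' ×ˢ Z' := by rw [← h]; exact ⟨ha, hb⟩
  constructor
  · ext c
    constructor
    · intro hc
      exact ((h ▸ (⟨hc, hb⟩ : (c, b) ∈ Y ×ˢ Z)) : (c, b) ∈ Y' ×ˢ Z').1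
    · intro hc
      exact ((h.symm ▸ (⟨hc, hab.2⟩ : (c, b) ∈ Y' ×ˢ Z')) : (c, b) ∈ Y ×ˢ Z).1
  · ext c
    constructor
    · intro hc
      exact ((h ▸ (⟨ha, hc⟩ : (a, c) ∈ Y ×ˢ Z)) : (a, c) ∈ Y' ×ˢ Z').2
    · intro hc
      exact ((h.symm ▸ (⟨hab.1, hc⟩ : (a, c) ∈ Y' ×ˢ Z')) : (a, c) ∈ Y ×ˢ Z).2

lemma classesOf_nonempty (hF : IsSchemeEquiv C F) {Y : Set V} (hY : Y ∈ classesOf F) :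
    Y.Nonempty := by
  obtain ⟨u, rfl⟩ := hY
  exact ⟨u, mem_rcl_self hF u⟩

/-- the fundamental counting: `|r| = |quotient relation| * |block|`. -/
lemma card_eq_quot_mul_block (hF : IsSchemeEquiv C F) {r : Set (V × V)}
    (hr : r ∈ C.classes) {x y : V} (hxy : (x, y) ∈ r) :
    r.ncard = (quotRel F r).ncard * (r ∩ (rcl F x) ×ˢ (rcl F y)).ncard := by
  have himg : ((fun q : Set V × Set V => q.1 ×ˢ q.2) '' (quotRel F r)).ncard
      = (quotRel F r).ncard := by
    apply Set.ncard_image_of_injOn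
    intro ⟨Y, Z⟩ h1 ⟨Y', Z'⟩ h2 heq
    have e := prod_inj_of_nonempty (classesOf_nonempty hF h1.1)
      (classesOf_nonempty hF h1.2.1) heq
    simp only [Prod.mk.injEq]
    exact ⟨e.1, e.2⟩
  rw [← himg]
  apply ncard_partition
  · rintro A ⟨⟨Y, Z⟩, hYZ, rfl⟩ B ⟨⟨Y', Z'⟩, hYZ', rfl⟩ hne
    have hYc : Y ∈ classesOf F := hYZ.1
    have hZc : Z ∈ classesOf F := hYZ.2.1
    have hYc' : Y' ∈ classesOf F := hYZ'.1
    have hZc' : Z' ∈ classesOf F := hYZ'.2.1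
    rcases classes_disjoint' hF hYc hYc' with hY | hY
    · rcases classes_disjoint' hF hZc hZc' with hZ | hZ
      · exact absurd (show Y ×ˢ Z = Y' ×ˢ Z' by rw [hY, hZ]) hne
      · exact prod_inter_empty_right hZ
    · exact prod_inter_empty_left hY
  · intro ⟨a, b⟩ hab
    exact ⟨(rcl F a) ×ˢ (rcl F b), ⟨(rcl F a, rcl F b), mem_quotRel_of_mem hF hab, rfl⟩,
      ⟨mem_rcl_self hF a, mem_rcl_self hF b⟩⟩
  · rintro A ⟨⟨Y, Z⟩, hYZ, rfl⟩
    exact block_const' hF hr hYZ hxy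

/-- out-degree -/
noncomputable def degr (r : Set (V × V)) (u : V) : ℕ := {w | (u, w) ∈ r}.ncard

lemma degr_eq_icnt (r : Set (V × V)) (u : V) : degr r u = icnt r (transp r) u u := by
  unfold degr icnt
  congr 1
  ext w
  simp only [Set.mem_setOf_eq]
  exact ⟨fun h => ⟨h, h⟩, fun h => h.1⟩

lemma degr_const {r : Set (V × V)} (hr : r ∈ C.classes) (u v : V) : degr r u = degr r v := by
  rw [degr_eq_icnt, degr_eq_icnt]
  exact icnt_cconst hr (C.transp_mem r hr) C.diag_mem rfl rfl

lemma degr_pos {r : Set (V × V)} (hr : r ∈ C.classes) (u : V) : 0 < degr r u := by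
  obtain ⟨⟨a, b⟩, hab⟩ := C.nonempty_mem r hr
  rw [degr_const hr u a]
  rw [degr, Set.ncard_pos (Set.toFinite _)]
  exact ⟨b, hab⟩

lemma card_eq_n_mul_degr {r : Set (V × V)} (hr : r ∈ C.classes) (u : V) :
    r.ncard = (Fintype.card V) * degr r u := by
  rw [ncard_eq_sum_cind, Fintype.sum_prod_type]
  have : ∀ a : V, ∑ b : V, cind ((a, b) ∈ r) = degr r u := by
    intro a
    rw [← degr_const hr a u, degr, ncard_eq_sum_cind]
    exact Finset.sum_congr rfl fun w _ => rfl
  rw [Finset.sum_congr rfl (fun a _ => this a), Finset.sum_const, Finset.card_univ,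
    smul_eq_mul]

lemma ncard_transp (r : Set (V × V)) : (transp r).ncard = r.ncard := by
  have : transp r = Prod.swap '' r := by
    ext ⟨a, b⟩
    constructor
    · intro h; exact ⟨(b, a), h, rfl⟩
    · rintro ⟨⟨x, y⟩, hxy, heq⟩
      have : (y, x) = (a, b) := heq
      obtain ⟨rfl, rfl⟩ := Prod.mk.injEq .. ▸ (by exact ⟨congrArg Prod.fst this, congrArg Prod.snd this⟩ : y = a ∧ x = b)
      exact hxy
  rw [this, Set.ncard_image_of_injective r Prod.swap_injective]

lemma degr_transp {r : Set (V × V)} (hr : r ∈ C.classes) (u v : V) :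
    degr (transp r) u = degr r v := by
  have h1 := card_eq_n_mul_degr (C.transp_mem r hr) u
  have h2 := card_eq_n_mul_degr hr v
  rw [ncard_transp] at h1
  have hn : 0 < Fintype.card V := by
    obtain ⟨⟨a, b⟩, _⟩ := C.nonempty_mem r hr
    exact Fintype.card_pos_iff.mpr ⟨a⟩
  exact Nat.eq_of_mul_eq_mul_left hn (h1 ▸ h2 ▸ rfl)

/-- supports of basis relations sharing a block-pair are equal -/
lemma quot_eq_of_mem (hF : IsSchemeEquiv C F) {t t' : Set (V × V)}
    (ht : t ∈ C.classes) (ht' : t' ∈ C.classes) {Y Z : Set V}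
    (h : (Y, Z) ∈ quotRel F t) (h' : (Y, Z) ∈ quotRel F t') :
    quotRel F t = quotRel F t' := by
  obtain ⟨D, hD, hFD⟩ := hF.1
  have main : ∀ s s' : Set (V × V), s ∈ C.classes → s' ∈ C.classes →
      (Y, Z) ∈ quotRel F s → (Y, Z) ∈ quotRel F s' → quotRel F s' ⊆ quotRel F s := by
    intro s s' hs hs' hm hm'
    obtain ⟨hYc, hZc, ⟨⟨a₀, b₀⟩, hab₀, ha₀, hb₀⟩⟩ := hm
    replace hYc : Y ∈ classesOf F := hYc
    replace hZc : Z ∈ classesOf F := hZc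
    replace ha₀ : a₀ ∈ Y := ha₀
    replace hb₀ : b₀ ∈ Z := hb₀
    obtain ⟨_, _, ⟨⟨a, b⟩, hab, ha, hb⟩⟩ := hm'
    replace ha : a ∈ Y := ha
    replace hb : b ∈ Z := hb
    have hpos : 0 < tcnt F s F a b := by
      rw [← block_eq_tcnt hF]
      rw [Set.ncard_pos (Set.toFinite _)]
      have eY : Y = rcl F a := classesOf_eq_rcl hF hYc ha
      have eZ : Z = rcl F b := classesOf_eq_rcl hF hZc hb
      refine ⟨(a₀, b₀), hab₀, ?_, ?_⟩
      · exact eY ▸ ha₀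
      · exact eZ ▸ hb₀
    have hall : ∀ x y : V, (x, y) ∈ s' → 0 < tcnt F s F x y := by
      intro x y hxy
      rw [show tcnt F s F x y = tcnt F s F a b from
        hFD ▸ tcnt_cconst hD hD hs hs' hxy hab]
      exact hpos
    rintro ⟨Y', Z'⟩ ⟨hY', hZ', ⟨⟨x, y⟩, hxy, hx, hy⟩⟩
    replace hY' : Y' ∈ classesOf F := hY'
    replace hZ' : Z' ∈ classesOf F := hZ'
    replace hx : x ∈ Y' := hx
    replace hy : y ∈ Z' := hy
    have := hall x y hxy
    rw [← block_eq_tcnt hF, Set.ncard_pos (Set.toFinite _)] at this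
    have e1 : Y' = rcl F x := classesOf_eq_rcl hF hY' hx
    have e2 : Z' = rcl F y := classesOf_eq_rcl hF hZ' hy
    refine ⟨?_, ?_, ?_⟩
    · rw [e1]; exact rcl_mem_classesOf x
    · rw [e2]; exact rcl_mem_classesOf y
    · show (s ∩ Y' ×ˢ Z').Nonempty
      rw [e1, e2]
      exact this
  exact Set.Subset.antisymm (main t' t ht' ht h' h) (main t t' ht ht' h h')

end AssocScheme
namespace AssocScheme

set_option linter.unusedSectionVars false

variable {V : Type*} [Fintype V] {C : AssocScheme V} {p : ℕ} {E F : Set (V × V)} {X : Set V}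

/-- quotient counts are p-powers -/
def QuotPow (C : AssocScheme V) (p : ℕ) (E : Set (V × V)) : Prop :=
  ∀ R ∈ C.classes, ∃ k : ℕ, (quotRel E R).ncard = p ^ k

/-- restriction counts are p-powers -/
def ResPow (C : AssocScheme V) (p : ℕ) (X : Set V) : Prop :=
  ∀ R ∈ C.classes, (R ∩ X ×ˢ X).Nonempty → ∃ k : ℕ, (R ∩ X ×ˢ X).ncard = p ^ k

lemma pow_of_dvd_pow (hp : p.Prime) {d K : ℕ} (h : d ∣ p ^ K) : ∃ k, d = p ^ k := by
  obtain ⟨i, _, hi⟩ := (Nat.dvd_prime_pow hp).mp h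
  exact ⟨i, hi⟩

/-- FORWARD direction -/
lemma forward_dir (hp : p.Prime) (hE : IsSchemeEquiv C E) (hX : X ∈ classesOf E)
    (hps : IsPScheme p C) : QuotPow C p E ∧ ResPow C p X := by
  constructor
  · intro R hR
    obtain ⟨K, hK⟩ := hps R hR
    obtain ⟨⟨x, y⟩, hxy⟩ := C.nonempty_mem R hR
    have hcard := card_eq_quot_mul_block hE hR hxy
    rw [hK] at hcard
    exact pow_of_dvd_pow hp ⟨_, hcard⟩
  · intro R hR hne
    obtain ⟨K, hK⟩ := hps R hR
    obtain ⟨⟨x, y⟩, hxy⟩ := C.nonempty_mem R hR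
    have hcard := card_eq_quot_mul_block hE hR hxy
    have hXX : (X, X) ∈ quotRel E R := ⟨hX, hX, hne⟩
    have hblk := block_const' hE hR hXX hxy
    rw [← hblk] at hcard
    rw [hK] at hcard
    have hdvd : (R ∩ X ×ˢ X).ncard ∣ p ^ K := ⟨(quotRel E R).ncard, by rw [hcard]; ring⟩
    exact pow_of_dvd_pow hp hdvd

lemma ncard_diag_block (Y : Set V) : (diag V ∩ Y ×ˢ Y).ncard = Y.ncard := by
  have himg : diag V ∩ Y ×ˢ Y = (fun u => (u, u)) '' Y := by
    ext z
    constructor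
    · rintro ⟨hd, hz1, hz2⟩
      exact ⟨z.1, hz1, Prod.ext rfl (hd : z.1 = z.2)⟩
    · rintro ⟨u, hu, rfl⟩
      exact ⟨rfl, hu, hu⟩
  rw [himg, Set.ncard_image_of_injective Y (fun a b h => congrArg Prod.fst h)]

lemma ncard_diag : (diag V).ncard = Fintype.card V := by
  have : diag V ∩ (Set.univ : Set V) ×ˢ (Set.univ : Set V) = diag V := by
    simp [Set.prod_univ]
  rw [← this]
  rw [ncard_diag_block]
  rw [Set.ncard_univ, Nat.card_eq_fintype_card]

lemma mem_diag (u : V) : (u, u) ∈ diag V := rfl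

/-- class sizes of a parabolic are constant -/
lemma rcl_ncard_const (hF : IsSchemeEquiv C F) (u v : V) :
    (rcl F u).ncard = (rcl F v).ncard := by
  have h := blocks_const (r := diag V) hF C.diag_mem (mem_diag u) (mem_diag v)
  rw [ncard_diag_block, ncard_diag_block] at h
  exact h

lemma X_eq_rcl (hE : IsSchemeEquiv C E) (hX : X ∈ classesOf E) {v : V} (hv : v ∈ X) :
    X = rcl E v := classesOf_eq_rcl hE hX hv

lemma internal_block_nonempty (hE : IsSchemeEquiv C E) (hX : X ∈ classesOf E)
    {t : Set (V × V)} (ht : t ∈ C.classes) (htE : t ⊆ E) : (t ∩ X ×ˢ X).Nonempty := by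
  obtain ⟨u, rfl⟩ := hX
  have hu : u ∈ rcl E u := mem_rcl_self hE u
  have := degr_pos ht u
  rw [degr, Set.ncard_pos (Set.toFinite _)] at this
  obtain ⟨w, hw⟩ := this
  exact ⟨(u, w), hw, hu, htE hw⟩

/-- internal basis relations have p-power cardinality -/
lemma internal_card_pow (hE : IsSchemeEquiv C E) (hX : X ∈ classesOf E)
    (Hq : QuotPow C p E) (Hr : ResPow C p X) {t : Set (V × V)} (ht : t ∈ C.classes) (htE : t ⊆ E) :
    ∃ k : ℕ, t.ncard = p ^ k := by
  obtain ⟨⟨a, b⟩, hab, haX, hbX⟩ := internal_block_nonempty hE hX ht htE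
  have hcard := card_eq_quot_mul_block hE ht hab
  have hXX : (X, X) ∈ quotRel E t := ⟨hX, hX, ⟨(a, b), hab, haX, hbX⟩⟩
  have hblk := block_const' hE ht hXX hab
  obtain ⟨k1, hk1⟩ := Hq t ht
  obtain ⟨k2, hk2⟩ := Hr t ht ⟨(a, b), hab, haX, hbX⟩
  exact ⟨k1 + k2, by rw [hcard, ← hblk, hk1, hk2, pow_add]⟩

/-- |V| is a p-power -/
lemma cardV_pow (hE : IsSchemeEquiv C E) (hX : X ∈ classesOf E)
    (Hq : QuotPow C p E) (Hr : ResPow C p X) : ∃ ν : ℕ, Fintype.card V = p ^ ν := by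
  obtain ⟨k, hk⟩ := internal_card_pow hE hX Hq Hr C.diag_mem (diag_subset hE)
  exact ⟨k, by rw [← ncard_diag, hk]⟩

/-- internal degrees are p-powers -/
lemma internal_degr_pow (hp : p.Prime) (hE : IsSchemeEquiv C E) (hX : X ∈ classesOf E)
    (Hq : QuotPow C p E) (Hr : ResPow C p X) {t : Set (V × V)} (ht : t ∈ C.classes) (htE : t ⊆ E) (u : V) :
    ∃ k : ℕ, degr t u = p ^ k := by
  obtain ⟨k, hk⟩ := internal_card_pow hE hX Hq Hr ht htE
  have := card_eq_n_mul_degr ht u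
  rw [hk] at this
  exact pow_of_dvd_pow hp ⟨Fintype.card V, by rw [this]; ring⟩

/-- |X| is a p-power -/
lemma q_pow (hE : IsSchemeEquiv C E) (hX : X ∈ classesOf E) (Hr : ResPow C p X) :
    ∃ e : ℕ, X.ncard = p ^ e := by
  obtain ⟨u, rfl⟩ := hX
  have hne : ((diag V) ∩ (rcl E u) ×ˢ (rcl E u)).Nonempty :=
    ⟨(u, u), mem_diag u, mem_rcl_self hE u, mem_rcl_self hE u⟩
  obtain ⟨k, hk⟩ := Hr (diag V) C.diag_mem hne
  rw [ncard_diag_block] at hk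
  exact ⟨k, hk⟩

end AssocScheme
namespace AssocScheme

set_option linter.unusedSectionVars false

variable {V : Type*} [Fintype V] {C : AssocScheme V} {p : ℕ} {E F : Set (V × V)} {X : Set V}

/-- `F` is a good parabolic: all its blocks on basis relations are `p`-powers. -/
def GoodPar (C : AssocScheme V) (p : ℕ) (E F : Set (V × V)) : Prop :=
  IsSchemeEquiv C F ∧ F ⊆ E ∧
    ∀ r ∈ C.classes, ∀ u v : V, (u, v) ∈ r →
      ∃ k : ℕ, (r ∩ (rcl F u) ×ˢ (rcl F v)).ncard = p ^ k

lemma rcl_mono_subset (hE : IsSchemeEquiv C E) (hFE : F ⊆ E) (hX : X ∈ classesOf E)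
    {u : V} (hu : u ∈ X) : rcl F u ⊆ X := by
  intro v hv
  rw [X_eq_rcl hE hX hu]
  exact hFE hv

lemma X_partition (hE : IsSchemeEquiv C E) (hF : IsSchemeEquiv C F) (hFE : F ⊆ E)
    (hX : X ∈ classesOf E) (u₀ : V) :
    X.ncard = ((rcl F) '' X).ncard * (rcl F u₀).ncard := by
  apply ncard_partition
  · rintro A ⟨u, huX, rfl⟩ B ⟨u', hu'X, rfl⟩ hAB
    rcases rcl_disjoint hF u u' with h | h
    · exact absurd h hAB
    · exact h
  · intro x hx
    exact ⟨rcl F x, ⟨x, hx, rfl⟩, mem_rcl_self hF x⟩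
  · rintro A ⟨u, huX, rfl⟩
    rw [Set.inter_eq_self_of_subset_right (rcl_mono_subset hE hFE hX huX)]
    exact rcl_ncard_const hF u u₀

lemma ncard_row_inter (t : Set (V × V)) (w : V) :
    (t ∩ ({w} : Set V) ×ˢ (Set.univ : Set V)).ncard = degr t w := by
  have himg : t ∩ ({w} : Set V) ×ˢ (Set.univ : Set V) = (fun c => (w, c)) '' {c | (w, c) ∈ t} := by
    ext ⟨a, c⟩
    constructor
    · rintro ⟨hac, ha, -⟩
      have : a = w := ha
      subst this
      exact ⟨c, hac, rfl⟩
    · rintro ⟨c', hc', heq⟩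
      cases heq
      exact ⟨hc', rfl, trivial⟩
  rw [himg, Set.ncard_image_of_injective _ (fun a b h => congrArg Prod.snd h)]
  rfl

lemma block_row_card (hF : IsSchemeEquiv C F) {t : Set (V × V)} (ht : t ∈ C.classes)
    (a u₀ : V) :
    (t ∩ (rcl F a) ×ˢ (Set.univ : Set V)).ncard = (rcl F a).ncard * degr t u₀ := by
  have himg : ((fun w => ({w} : Set V) ×ˢ (Set.univ : Set V)) '' (rcl F a)).ncard
      = (rcl F a).ncard := by
    apply Set.ncard_image_of_injOn
    intro w _ w' _ heq
    have heq' : ({w} : Set V) ×ˢ (Set.univ : Set V) = ({w'} : Set V) ×ˢ (Set.univ : Set V) :=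
      heq
    have : (w, a) ∈ ({w'} : Set V) ×ˢ (Set.univ : Set V) := by
      rw [← heq']; exact ⟨rfl, trivial⟩
    exact this.1
  rw [← himg]
  apply ncard_partition
  · rintro A ⟨w, hw, rfl⟩ B ⟨w', hw', rfl⟩ hAB
    have hne : w ≠ w' := by
      intro h; exact hAB (by rw [h])
    apply prod_inter_empty_left
    ext c
    simp only [Set.mem_inter_iff, Set.mem_singleton_iff, Set.mem_empty_iff_false, iff_false]
    rintro ⟨rfl, h2⟩
    exact hne h2
  · rintro ⟨w, c⟩ ⟨hwc, hw, -⟩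
    exact ⟨({w} : Set V) ×ˢ Set.univ, ⟨w, hw, rfl⟩, rfl, trivial⟩
  · rintro A ⟨w, hw, rfl⟩
    have hsub : ({w} : Set V) ×ˢ (Set.univ : Set V) ⊆ (rcl F a) ×ˢ (Set.univ : Set V) := by
      rintro ⟨x, c⟩ ⟨hx, -⟩
      have : x = w := hx
      subst this
      exact ⟨hw, trivial⟩
    rw [Set.inter_assoc, Set.inter_eq_self_of_subset_right hsub, ncard_row_inter]
    exact degr_const ht w u₀

lemma row_count (hF : IsSchemeEquiv C F) {t : Set (V × V)} (ht : t ∈ C.classes)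
    {x y : V} (hxy : (x, y) ∈ t) (a : V) :
    (t ∩ (rcl F a) ×ˢ (Set.univ : Set V)).ncard
      = {Z : Set V | (rcl F a, Z) ∈ quotRel F t}.ncard
          * (t ∩ (rcl F x) ×ˢ (rcl F y)).ncard := by
  have himg : ((fun Z => (rcl F a) ×ˢ Z) '' {Z : Set V | (rcl F a, Z) ∈ quotRel F t}).ncard
      = {Z : Set V | (rcl F a, Z) ∈ quotRel F t}.ncard := by
    apply Set.ncard_image_of_injOn
    intro Z hZ Z' hZ' heq
    have hZc : Z ∈ classesOf F := hZ.2.1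
    have hZc' : Z' ∈ classesOf F := hZ'.2.1
    exact (prod_inj_of_nonempty ⟨a, mem_rcl_self hF a⟩ (classesOf_nonempty hF hZc) heq).2
  rw [← himg]
  apply ncard_partition
  · rintro A ⟨Z, hZ, rfl⟩ B ⟨Z', hZ', rfl⟩ hAB
    have hZc : Z ∈ classesOf F := hZ.2.1
    have hZc' : Z' ∈ classesOf F := hZ'.2.1
    rcases classes_disjoint' hF hZc hZc' with h | h
    · exact absurd (show (rcl F a) ×ˢ Z = (rcl F a) ×ˢ Z' by rw [show Z = Z' from h]) hAB
    · exact prod_inter_empty_right h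
  · rintro ⟨w, w'⟩ ⟨hww', hw, -⟩
    refine ⟨(rcl F a) ×ˢ (rcl F w'), ⟨rcl F w', ?_, rfl⟩, hw, mem_rcl_self hF w'⟩
    exact ⟨rcl_mem_classesOf a, rcl_mem_classesOf w',
      ⟨(w, w'), hww', hw, mem_rcl_self hF w'⟩⟩
  · rintro A ⟨Z, hZ, rfl⟩
    have hZc : Z ∈ classesOf F := hZ.2.1
    have hsub : (rcl F a) ×ˢ Z ⊆ (rcl F a) ×ˢ (Set.univ : Set V) := by
      rintro ⟨w, w'⟩ ⟨hw, -⟩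
      exact ⟨hw, trivial⟩
    rw [Set.inter_assoc, Set.inter_eq_self_of_subset_right hsub]
    exact block_const' hF ht hZ hxy

lemma quotRel_transp_mem {t : Set (V × V)} {Y Z : Set V} :
    (Y, Z) ∈ quotRel F (transp t) ↔ (Z, Y) ∈ quotRel F t := by
  constructor
  · rintro ⟨h1, h2, ⟨⟨a, b⟩, hab, ha, hb⟩⟩
    exact ⟨h2, h1, ⟨(b, a), hab, hb, ha⟩⟩
  · rintro ⟨h1, h2, ⟨⟨a, b⟩, hab, ha, hb⟩⟩
    exact ⟨h2, h1, ⟨(b, a), hab, hb, ha⟩⟩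

lemma ncard_block_transp (t : Set (V × V)) (Y Z : Set V) :
    (transp t ∩ Z ×ˢ Y).ncard = (t ∩ Y ×ˢ Z).ncard := by
  have himg : transp t ∩ Z ×ˢ Y = Prod.swap '' (t ∩ Y ×ˢ Z) := by
    ext ⟨a, b⟩
    constructor
    · rintro ⟨hab, ha, hb⟩
      exact ⟨(b, a), ⟨hab, hb, ha⟩, rfl⟩
    · rintro ⟨⟨x, y⟩, ⟨hxy, hx, hy⟩, heq⟩
      cases heq
      exact ⟨hxy, hy, hx⟩
  rw [himg, Set.ncard_image_of_injective _ Prod.swap_injective]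

noncomputable def pk (x₀ : V) (Z : Set V) : V :=
  @dite _ Z.Nonempty (Classical.propDecidable _) (fun h => h.some) (fun _ => x₀)

lemma pk_mem {Z : Set V} (h : Z.Nonempty) (x₀ : V) : pk x₀ Z ∈ Z := by
  unfold pk
  rw [dif_pos h]
  exact h.some_mem

/-- Existence of a relatively thin relation modulo a proper good parabolic. -/
lemma thin_exists (hp : p.Prime) (hE : IsSchemeEquiv C E) (hX : X ∈ classesOf E)
    (Hq : QuotPow C p E) (Hr : ResPow C p X) (hG : GoodPar C p E F) (hne : F ≠ E) :
    ∃ t ∈ C.classes, t ⊆ E ∧ t ∩ F = ∅ ∧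
      (∀ a : V, {Z : Set V | (rcl F a, Z) ∈ quotRel F t}.ncard = 1) ∧
      (∀ b : V, {Y : Set V | (Y, rcl F b) ∈ quotRel F t}.ncard = 1) := by
  classical
  obtain ⟨hF, hFE, HB⟩ := hG
  obtain ⟨x₀, hX0⟩ := hX
  have hX0' : X = rcl E x₀ := hX0
  have hx₀X : x₀ ∈ X := by rw [hX0']; exact mem_rcl_self hE x₀
  have hXc : X ∈ classesOf E := ⟨x₀, hX0⟩
  obtain ⟨e, he⟩ := q_pow hE hXc Hr
  have hqf : ∃ i, (rcl F x₀).ncard = p ^ i := by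
    obtain ⟨k, hk⟩ := HB (diag V) C.diag_mem x₀ x₀ (mem_diag x₀)
    rw [ncard_diag_block] at hk
    exact ⟨k, hk⟩
  obtain ⟨i, hi⟩ := hqf
  have hpart : X.ncard = ((rcl F) '' X).ncard * (rcl F x₀).ncard :=
    X_partition hE hF hFE hXc x₀
  obtain ⟨j, hj⟩ : ∃ j, ((rcl F) '' X).ncard = p ^ j :=
    pow_of_dvd_pow hp ⟨(rcl F x₀).ncard, by rw [← he, hpart]⟩
  have hQpos : 0 < ((rcl F) '' X).ncard :=
    (Set.ncard_pos (Set.toFinite _)).mpr ⟨rcl F x₀, ⟨x₀, hx₀X, rfl⟩⟩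
  have hQgt : 1 < ((rcl F) '' X).ncard := by
    rcases Nat.lt_or_ge 1 (((rcl F) '' X).ncard) with h | h
    · exact h
    · exfalso
      have hQ1 : ((rcl F) '' X).ncard = 1 := le_antisymm h hQpos
      have hq_eq : X.ncard = (rcl F x₀).ncard := by rw [hpart, hQ1, one_mul]
      apply hne
      have hsz : ∀ u : V, rcl F u = rcl E u := by
        intro u
        have hsub : rcl F u ⊆ rcl E u := fun v hv => hFE hv
        refine Set.eq_of_subset_of_ncard_le hsub ?_ (Set.toFinite _)
        rw [rcl_ncard_const hE u x₀, ← hX0', hq_eq, rcl_ncard_const hF x₀ u]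
      ext ⟨u, v⟩
      constructor
      · intro h'; exact hFE h'
      · intro h'
        have : v ∈ rcl E u := h'
        rw [← hsz u] at this
        exact this
  have hpQ : p ∣ ((rcl F) '' X).ncard := by
    rcases j with _ | j'
    · rw [hj] at hQgt; norm_num at hQgt
    · rw [hj]; exact dvd_pow_self p (Nat.succ_ne_zero j')
  -- fiberwise counting over classes within X
  have hA0f : rcl F x₀ ∈ ((rcl F) '' X).toFinite.toFinset := by
    rw [Set.Finite.mem_toFinset]; exact ⟨x₀, hx₀X, rfl⟩
  set T : Finset (Set V) := (((rcl F) '' X).toFinite.toFinset).erase (rcl F x₀) with hT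
  have hTcard : T.card = ((rcl F) '' X).ncard - 1 := by
    rw [hT, Finset.card_erase_of_mem hA0f, Set.ncard_eq_toFinset_card _ (Set.toFinite _)]
  set g : Set V → Set (Set V × Set V) := fun Z => quotRel F (C.cls (x₀, pk x₀ Z)) with hg
  have hfib := Finset.card_eq_sum_card_fiberwise (f := g) (s := T) (t := T.image g)
      (fun x hx => Finset.mem_image_of_mem g hx)
  have hex : ∃ Sv ∈ T.image g, ¬ p ∣ (T.filter (fun Z => g Z = Sv)).card := by
    by_contra hall
    push_neg at hall
    have hdvd : p ∣ T.card := hfib ▸ Finset.dvd_sum hall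
    rw [hTcard] at hdvd
    have h1 : p ∣ 1 := by
      have h2 := Nat.dvd_sub hpQ hdvd
      rwa [Nat.sub_sub_self (le_of_lt hQgt)] at h2
    exact absurd (Nat.dvd_one.mp h1) (Nat.Prime.ne_one hp)
  obtain ⟨Sv, hSv, hnd⟩ := hex
  obtain ⟨B, hBT, hgB⟩ := Finset.mem_image.mp hSv
  have hBf : B ∈ ((rcl F) '' X).toFinite.toFinset := Finset.mem_of_mem_erase hBT
  have hBneA : B ≠ rcl F x₀ := Finset.ne_of_mem_erase hBT
  have hBmem : B ∈ (rcl F) '' X := (Set.Finite.mem_toFinset _).mp hBf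
  obtain ⟨x', hx'X, hBeq⟩ := hBmem
  have hBne : B.Nonempty := ⟨x', by rw [← hBeq]; exact mem_rcl_self hF x'⟩
  have hbB : pk x₀ B ∈ B := pk_mem hBne x₀
  have hbX : pk x₀ B ∈ X := rcl_mono_subset hE hFE hXc hx'X (hBeq ▸ hbB)
  have htc : C.cls (x₀, pk x₀ B) ∈ C.classes := C.cls_mem_classes _
  have htmem : (x₀, pk x₀ B) ∈ C.cls (x₀, pk x₀ B) := C.mem_cls _
  have hx₀b_E : (x₀, pk x₀ B) ∈ E := by rw [hX0'] at hbX; exact hbX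
  have htE : C.cls (x₀, pk x₀ B) ⊆ E :=
    basis_subset_of_inter hE htc ⟨(x₀, pk x₀ B), htmem, hx₀b_E⟩
  have hbA0 : pk x₀ B ∉ rcl F x₀ := by
    intro hmem
    apply hBneA
    have hbB' : pk x₀ B ∈ rcl F x' := by rw [hBeq]; exact hbB
    have e1 : B = rcl F (pk x₀ B) := by
      have h' := rcl_eq_of_rel hF (show (x', pk x₀ B) ∈ F from hbB')
      rw [hBeq] at h'
      exact h'
    have e2 : rcl F x₀ = rcl F (pk x₀ B) := rcl_eq_of_rel hF hmem
    rw [e1, e2]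
  have htF : C.cls (x₀, pk x₀ B) ∩ F = ∅ := by
    by_contra hne'
    have hsub : C.cls (x₀, pk x₀ B) ⊆ F :=
      basis_subset_of_inter hF htc (Set.nonempty_iff_ne_empty.mpr hne')
    exact hbA0 (hsub htmem)
  -- identify the fiber with the row set
  have hfibset : ∀ Z : Set V, (Z ∈ T ∧ g Z = Sv) ↔
      (rcl F x₀, Z) ∈ quotRel F (C.cls (x₀, pk x₀ B)) := by
    intro Z
    constructor
    · rintro ⟨hZT, hgZ⟩
      have hZf : Z ∈ (rcl F) '' X :=
        (Set.Finite.mem_toFinset _).mp (Finset.mem_of_mem_erase hZT)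
      obtain ⟨z', hz'X, hZeq⟩ := hZf
      have hZne : Z.Nonempty := ⟨z', by rw [← hZeq]; exact mem_rcl_self hF z'⟩
      have hzZ : pk x₀ Z ∈ Z := pk_mem hZne x₀
      have hmm : (rcl F x₀, Z) ∈ g Z :=
        ⟨rcl_mem_classesOf x₀, ⟨z', hZeq.symm⟩,
          ⟨(x₀, pk x₀ Z), C.mem_cls _, mem_rcl_self hF x₀, hzZ⟩⟩
      rw [hgZ, ← hgB] at hmm
      exact hmm
    · intro hquot
      have hquot' := hquot
      obtain ⟨h1, h2, ⟨⟨w, w'⟩, hww', hw, hw'⟩⟩ := hquot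
      replace h2 : Z ∈ classesOf F := h2
      replace hw : w ∈ rcl F x₀ := hw
      replace hw' : w' ∈ Z := hw'
      have hwX : w ∈ X := by rw [hX0']; exact hFE hw
      have hw'X : w' ∈ X := by
        rw [X_eq_rcl hE hXc hwX]
        exact htE hww'
      have hZeq : Z = rcl F w' := classesOf_eq_rcl hF h2 hw'
      have hZf : Z ∈ ((rcl F) '' X).toFinite.toFinset := by
        rw [Set.Finite.mem_toFinset]; exact ⟨w', hw'X, hZeq.symm⟩
      have hZneA : Z ≠ rcl F x₀ := by
        intro hZA0
        have hrel : (w, w') ∈ F :=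
          rel_of_mem_rcl hF hw (by rw [← hZA0]; exact hw')
        have hcontra : (C.cls (x₀, pk x₀ B) ∩ F).Nonempty := ⟨(w, w'), hww', hrel⟩
        rw [htF] at hcontra
        exact Set.not_nonempty_empty hcontra
      refine ⟨Finset.mem_erase.mpr ⟨hZneA, hZf⟩, ?_⟩
      have hzZ : pk x₀ Z ∈ Z := pk_mem ⟨w', hw'⟩ x₀
      have hmm2 : (rcl F x₀, Z) ∈ g Z :=
        ⟨rcl_mem_classesOf x₀, h2,
          ⟨(x₀, pk x₀ Z), C.mem_cls _, mem_rcl_self hF x₀, hzZ⟩⟩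
      have hq := quot_eq_of_mem hF (C.cls_mem_classes (x₀, pk x₀ Z)) htc hmm2 hquot'
      rw [← hgB]
      exact hq
  have hfc : (T.filter (fun Z => g Z = Sv)).card
      = {Z : Set V | (rcl F x₀, Z) ∈ quotRel F (C.cls (x₀, pk x₀ B))}.ncard := by
    have hset : T.filter (fun Z => g Z = Sv)
        = (Set.toFinite {Z : Set V | (rcl F x₀, Z) ∈
            quotRel F (C.cls (x₀, pk x₀ B))}).toFinset := by
      ext Z
      rw [Finset.mem_filter, Set.Finite.mem_toFinset]
      exact hfibset Z
    rw [hset, ← Set.ncard_eq_toFinset_card _ (Set.toFinite _)]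
  rw [hfc] at hnd
  -- the degree computation
  have hrow : ∀ a : V,
      {Z : Set V | (rcl F a, Z) ∈ quotRel F (C.cls (x₀, pk x₀ B))}.ncard
        * (C.cls (x₀, pk x₀ B) ∩ (rcl F x₀) ×ˢ (rcl F (pk x₀ B))).ncard
      = (rcl F x₀).ncard * degr (C.cls (x₀, pk x₀ B)) x₀ := by
    intro a
    rw [← row_count hF htc htmem a, block_row_card hF htc a x₀, rcl_ncard_const hF a x₀]
  have hcpos : 0 < (C.cls (x₀, pk x₀ B) ∩ (rcl F x₀) ×ˢ (rcl F (pk x₀ B))).ncard := by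
    rw [Set.ncard_pos (Set.toFinite _)]
    exact ⟨(x₀, pk x₀ B), htmem, mem_rcl_self hF x₀, mem_rcl_self hF (pk x₀ B)⟩
  obtain ⟨kc, hkc⟩ := HB _ htc x₀ (pk x₀ B) htmem
  obtain ⟨kd, hkd⟩ := internal_degr_pow hp hE hXc Hq Hr htc htE x₀
  have hd1 : {Z : Set V | (rcl F x₀, Z) ∈ quotRel F (C.cls (x₀, pk x₀ B))}.ncard = 1 := by
    have heq := hrow x₀
    rw [hkc, hi, hkd, ← pow_add] at heq
    obtain ⟨kk, hkk⟩ := pow_of_dvd_pow hp ⟨p ^ kc, heq.symm⟩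
    rcases kk with _ | kk'
    · rw [hkk]; rfl
    · exfalso
      exact hnd (hkk ▸ dvd_pow_self p (Nat.succ_ne_zero kk'))
  have hrowall : ∀ a : V,
      {Z : Set V | (rcl F a, Z) ∈ quotRel F (C.cls (x₀, pk x₀ B))}.ncard = 1 := by
    intro a
    have h1 := hrow a
    have h2 := hrow x₀
    rw [hd1, one_mul] at h2
    rw [← h2] at h1
    exact Nat.eq_of_mul_eq_mul_right hcpos (by rw [h1, one_mul])
  -- columns via the transpose
  have hcolall : ∀ b : V,
      {Y : Set V | (Y, rcl F b) ∈ quotRel F (C.cls (x₀, pk x₀ B))}.ncard = 1 := by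
    intro b
    have hsetid : {Y : Set V | (Y, rcl F b) ∈ quotRel F (C.cls (x₀, pk x₀ B))}
        = {Y : Set V | (rcl F b, Y) ∈ quotRel F (transp (C.cls (x₀, pk x₀ B)))} := by
      ext Y
      simp only [Set.mem_setOf_eq]
      exact quotRel_transp_mem.symm
    rw [hsetid]
    have httc : transp (C.cls (x₀, pk x₀ B)) ∈ C.classes := C.transp_mem _ htc
    have htmemT : (pk x₀ B, x₀) ∈ transp (C.cls (x₀, pk x₀ B)) := htmem
    have hrowT := row_count hF httc htmemT b
    rw [block_row_card hF httc b x₀, rcl_ncard_const hF b x₀] at hrowT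
    rw [ncard_block_transp] at hrowT
    have hdegT : degr (transp (C.cls (x₀, pk x₀ B))) x₀ = degr (C.cls (x₀, pk x₀ B)) x₀ :=
      degr_transp htc x₀ x₀
    rw [hdegT] at hrowT
    have h2 := hrow x₀
    rw [hd1, one_mul] at h2
    rw [← h2] at hrowT
    refine Nat.eq_of_mul_eq_mul_right hcpos ?_
    rw [one_mul]
    exact hrowT.symm
  exact ⟨C.cls (x₀, pk x₀ B), htc, htE, htF, hrowall, hcolall⟩

end AssocScheme
namespace AssocScheme

set_option linter.unusedSectionVars false

variable {V : Type*} [Fintype V] {C : AssocScheme V} {F : Set (V × V)}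

/-- the successor function on classes induced by a relation with unique row-classes -/
noncomputable def nxtF (F g : Set (V × V)) (A : Set V) : Set V :=
  ⋃₀ {Z : Set V | (A, Z) ∈ quotRel F g}

def UniqRow (F g : Set (V × V)) : Prop :=
  ∀ a : V, {Z : Set V | (rcl F a, Z) ∈ quotRel F g}.ncard = 1

def UniqCol (F g : Set (V × V)) : Prop :=
  ∀ b : V, {Y : Set V | (Y, rcl F b) ∈ quotRel F g}.ncard = 1

lemma rowset_transp_eq (g : Set (V × V)) (b : V) :
    {Y : Set V | (rcl F b, Y) ∈ quotRel F (transp g)}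
      = {Y : Set V | (Y, rcl F b) ∈ quotRel F g} := by
  ext Y
  simp only [Set.mem_setOf_eq]
  exact quotRel_transp_mem

lemma uniqRow_transp {g : Set (V × V)} (h : UniqCol F g) : UniqRow F (transp g) := by
  intro a
  rw [rowset_transp_eq]
  exact h a

lemma nxt_spec {g : Set (V × V)} {a : V}
    (hU : {Z : Set V | (rcl F a, Z) ∈ quotRel F g}.ncard = 1) :
    ∀ Z : Set V, ((rcl F a, Z) ∈ quotRel F g ↔ Z = nxtF F g (rcl F a)) := by
  obtain ⟨Z₀, hZ₀⟩ := Set.ncard_eq_one.mp hU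
  have hnxt : nxtF F g (rcl F a) = Z₀ := by
    rw [nxtF, hZ₀, Set.sUnion_singleton]
  intro Z
  constructor
  · intro h
    have hZmem : Z ∈ {Z : Set V | (rcl F a, Z) ∈ quotRel F g} := h
    rw [hZ₀] at hZmem
    rw [hnxt]
    exact hZmem
  · intro h
    have : Z₀ ∈ {Z : Set V | (rcl F a, Z) ∈ quotRel F g} := by
      rw [hZ₀]; rfl
    rw [h, hnxt]
    exact this

lemma nxt_mem_quot {g : Set (V × V)} {a : V}
    (hU : {Z : Set V | (rcl F a, Z) ∈ quotRel F g}.ncard = 1) :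
    (rcl F a, nxtF F g (rcl F a)) ∈ quotRel F g :=
  (nxt_spec hU (nxtF F g (rcl F a))).mpr rfl

lemma nxt_mem_classesOf {g : Set (V × V)} {a : V}
    (hU : {Z : Set V | (rcl F a, Z) ∈ quotRel F g}.ncard = 1) :
    nxtF F g (rcl F a) ∈ classesOf F :=
  (nxt_mem_quot hU).2.1

/-- injectivity of `nxtF` on classes, from column uniqueness -/
lemma nxt_inj (hF : IsSchemeEquiv C F) {g : Set (V × V)} (hrow : UniqRow F g)
    (hcol : UniqCol F g) {A A' : Set V} (hA : A ∈ classesOf F) (hA' : A' ∈ classesOf F)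
    (h : nxtF F g A = nxtF F g A') : A = A' := by
  obtain ⟨a, hAa⟩ := classesOf_nonempty hF hA
  obtain ⟨a', hAa'⟩ := classesOf_nonempty hF hA'
  have eA : A = rcl F a := classesOf_eq_rcl hF hA hAa
  have eA' : A' = rcl F a' := classesOf_eq_rcl hF hA' hAa'
  have h1 : (rcl F a, nxtF F g (rcl F a)) ∈ quotRel F g := nxt_mem_quot (hrow a)
  have h2 : (rcl F a', nxtF F g (rcl F a')) ∈ quotRel F g := nxt_mem_quot (hrow a')
  rw [← eA] at h1
  rw [← eA'] at h2
  rw [h] at h1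
  -- both A and A' lie in the column set of nxtF F g A'
  obtain ⟨b, hb⟩ := classesOf_nonempty hF h2.2.1
  have eb : nxtF F g A' = rcl F b := classesOf_eq_rcl hF h2.2.1 hb
  rw [eb] at h1 h2
  obtain ⟨Y₀, hY₀⟩ := Set.ncard_eq_one.mp (hcol b)
  have m1 : A ∈ {Y : Set V | (Y, rcl F b) ∈ quotRel F g} := h1
  have m2 : A' ∈ {Y : Set V | (Y, rcl F b) ∈ quotRel F g} := h2
  rw [hY₀] at m1 m2
  rw [m1, m2]

lemma transp_comp (R S : Set (V × V)) : transp (comp R S) = comp (transp S) (transp R) := by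
  ext ⟨a, b⟩
  constructor
  · rintro ⟨w, h1, h2⟩
    exact ⟨w, h2, h1⟩
  · rintro ⟨w, h1, h2⟩
    exact ⟨w, h2, h1⟩

lemma comp_nonempty {s g : Set (V × V)} (hs : s ∈ C.classes) (hg : g ∈ C.classes) :
    (comp s g).Nonempty := by
  obtain ⟨⟨x, w⟩, hxw⟩ := C.nonempty_mem s hs
  have := degr_pos hg w
  rw [degr, Set.ncard_pos (Set.toFinite _)] at this
  obtain ⟨z, hz⟩ := this
  exact ⟨(x, z), w, hxw, hz⟩

lemma exists_basis_in_comp {s g : Set (V × V)} (hs : s ∈ C.classes) (hg : g ∈ C.classes) :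
    ∃ g' ∈ C.classes, g' ⊆ comp s g := by
  obtain ⟨⟨x, z⟩, hxz⟩ := comp_nonempty hs hg
  exact ⟨C.cls (x, z), C.cls_mem_classes _,
    basis_subset_comp hs hg (C.cls_mem_classes _) ⟨(x, z), C.mem_cls _, hxz⟩⟩

/-- right shift lemma -/
lemma shiftR (hF : IsSchemeEquiv C F) {s g g' : Set (V × V)} (hs : s ∈ C.classes)
    (hg : g ∈ C.classes) (hg' : g' ∈ C.classes) (hsub : g' ⊆ comp s g)
    (hrow : UniqRow F g) (hcol : UniqCol F g) :
    ∀ (a : V) (Z : Set V), Z ∈ classesOf F →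
      ((rcl F a, Z) ∈ quotRel F g' ↔ (rcl F a, nxtF F (transp g) Z) ∈ quotRel F s) := by
  have hrowT : UniqRow F (transp g) := uniqRow_transp hcol
  -- prv is injective on classes
  have hprv_inj : ∀ {Z Z' : Set V}, Z ∈ classesOf F → Z' ∈ classesOf F →
      nxtF F (transp g) Z = nxtF F (transp g) Z' → Z = Z' := by
    intro Z Z' hZ hZ' heq
    obtain ⟨z, hz⟩ := classesOf_nonempty hF hZ
    obtain ⟨z', hz'⟩ := classesOf_nonempty hF hZ'
    have eZ : Z = rcl F z := classesOf_eq_rcl hF hZ hz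
    have eZ' : Z' = rcl F z' := classesOf_eq_rcl hF hZ' hz'
    have h1 : (rcl F z, nxtF F (transp g) (rcl F z)) ∈ quotRel F (transp g) :=
      nxt_mem_quot (hrowT z)
    have h2 : (rcl F z', nxtF F (transp g) (rcl F z')) ∈ quotRel F (transp g) :=
      nxt_mem_quot (hrowT z')
    rw [← eZ] at h1
    rw [← eZ'] at h2
    rw [heq] at h1
    -- (prv Z', Z) and (prv Z', Z') both in quotRel g
    have h1' := quotRel_transp_mem.mp h1
    have h2' := quotRel_transp_mem.mp h2
    obtain ⟨w, hw⟩ := classesOf_nonempty hF h2.2.1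
    have ew : nxtF F (transp g) Z' = rcl F w := classesOf_eq_rcl hF h2.2.1 hw
    rw [ew] at h1' h2'
    obtain ⟨Z₀, hZ₀⟩ := Set.ncard_eq_one.mp (hrow w)
    have m1 : Z ∈ {W : Set V | (rcl F w, W) ∈ quotRel F g} := h1'
    have m2 : Z' ∈ {W : Set V | (rcl F w, W) ∈ quotRel F g} := h2'
    rw [hZ₀] at m1 m2
    rw [m1, m2]
  intro a Z hZ
  obtain ⟨z, hzZ⟩ := classesOf_nonempty hF hZ
  have eZ : Z = rcl F z := classesOf_eq_rcl hF hZ hzZ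
  constructor
  · rintro ⟨-, -, ⟨⟨x, z'⟩, hxz', hx, hz'⟩⟩
    replace hx : x ∈ rcl F a := hx
    replace hz' : z' ∈ Z := hz'
    obtain ⟨w, hxw, hwz'⟩ := hsub hxz'
    -- rcl F w = prv Z
    have hTmem : (rcl F z', rcl F w) ∈ quotRel F (transp g) :=
      mem_quotRel_of_mem hF (show (z', w) ∈ transp g from hwz')
    have ez' : Z = rcl F z' := classesOf_eq_rcl hF hZ hz'
    have hwprv : rcl F w = nxtF F (transp g) (rcl F z') :=
      (nxt_spec (hrowT z') (rcl F w)).mp hTmem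
    rw [← ez'] at hwprv
    refine ⟨rcl_mem_classesOf a, ?_, ⟨(x, w), hxw, hx, ?_⟩⟩
    · rw [← hwprv]; exact rcl_mem_classesOf w
    · rw [← hwprv]; exact mem_rcl_self hF w
  · intro hmem
    obtain ⟨-, -, ⟨⟨x, w⟩, hxw, hx, hw⟩⟩ := hmem
    replace hx : x ∈ rcl F a := hx
    replace hw : w ∈ nxtF F (transp g) Z := hw
    -- s ⊆ comp g' (transp g)
    have habs : s ⊆ comp g' (transp g) := by
      obtain ⟨⟨x₁, z₁⟩, hx₁z₁⟩ := C.nonempty_mem g' hg'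
      obtain ⟨w₁, hw₁, hw₁'⟩ := hsub hx₁z₁
      exact basis_subset_comp hg' (C.transp_mem g hg) hs
        ⟨(x₁, w₁), hw₁, ⟨z₁, hx₁z₁, hw₁'⟩⟩
    obtain ⟨m, hxm, hmw⟩ := habs hxw
    -- rcl F m = Z
    have hTmem : (rcl F m, rcl F w) ∈ quotRel F (transp g) :=
      mem_quotRel_of_mem hF (show (m, w) ∈ transp g from hmw)
    have hclm : rcl F w = nxtF F (transp g) (rcl F m) :=
      (nxt_spec (hrowT m) (rcl F w)).mp hTmem
    have hprvZ_cl : nxtF F (transp g) Z ∈ classesOf F := by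
      rw [eZ]; exact nxt_mem_classesOf (hrowT z)
    have hwcl : nxtF F (transp g) Z = rcl F w := classesOf_eq_rcl hF hprvZ_cl hw
    have : nxtF F (transp g) (rcl F m) = nxtF F (transp g) Z := by
      rw [← hclm, hwcl]
    have hmZ : rcl F m = Z := hprv_inj (rcl_mem_classesOf m) hZ this
    exact ⟨rcl_mem_classesOf a, hZ, ⟨(x, m), hxm, hx, by rw [← hmZ]; exact mem_rcl_self hF m⟩⟩

/-- left shift lemma -/
lemma shiftL (hF : IsSchemeEquiv C F) {s g g' : Set (V × V)} (hs : s ∈ C.classes)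
    (hg : g ∈ C.classes) (hg' : g' ∈ C.classes) (hsub : g' ⊆ comp g s)
    (hrow : UniqRow F g) (hcol : UniqCol F g) :
    ∀ (a : V) (Z : Set V), Z ∈ classesOf F →
      ((rcl F a, Z) ∈ quotRel F g' ↔ (nxtF F g (rcl F a), Z) ∈ quotRel F s) := by
  intro a Z hZ
  constructor
  · rintro ⟨-, -, ⟨⟨x, z⟩, hxz, hx, hz⟩⟩
    replace hx : x ∈ rcl F a := hx
    replace hz : z ∈ Z := hz
    obtain ⟨w, hxw, hwz⟩ := hsub hxz
    have hmem : (rcl F x, rcl F w) ∈ quotRel F g := mem_quotRel_of_mem hF hxw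
    have hax : rcl F a = rcl F x := classesOf_eq_rcl hF (rcl_mem_classesOf a) hx
    have hw : rcl F w = nxtF F g (rcl F x) := (nxt_spec (hrow x) (rcl F w)).mp hmem
    rw [← hax] at hw
    refine ⟨?_, hZ, ⟨(w, z), hwz, ?_, hz⟩⟩
    · rw [← hw]; exact rcl_mem_classesOf w
    · rw [← hw]; exact mem_rcl_self hF w
  · intro hmem
    obtain ⟨-, -, ⟨⟨w, z⟩, hwz, hw, hz⟩⟩ := hmem
    replace hw : w ∈ nxtF F g (rcl F a) := hw
    replace hz : z ∈ Z := hz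
    -- s ⊆ comp (transp g) g'
    have habs : s ⊆ comp (transp g) g' := by
      obtain ⟨⟨x₁, z₁⟩, hx₁z₁⟩ := C.nonempty_mem g' hg'
      obtain ⟨w₁, hw₁, hw₁'⟩ := hsub hx₁z₁
      exact basis_subset_comp (C.transp_mem g hg) hg' hs
        ⟨(w₁, z₁), hw₁', ⟨x₁, hw₁, hx₁z₁⟩⟩
    obtain ⟨x, hwx, hxz⟩ := habs hwz
    -- (x, w) ∈ g
    have hxw : (x, w) ∈ g := hwx
    have hmem2 : (rcl F x, rcl F w) ∈ quotRel F g := mem_quotRel_of_mem hF hxw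
    have hw1 : rcl F w = nxtF F g (rcl F x) := (nxt_spec (hrow x) (rcl F w)).mp hmem2
    have hnxtcl : nxtF F g (rcl F a) ∈ classesOf F := nxt_mem_classesOf (hrow a)
    have hw2 : nxtF F g (rcl F a) = rcl F w := classesOf_eq_rcl hF hnxtcl hw
    have heq : nxtF F g (rcl F x) = nxtF F g (rcl F a) := by rw [← hw1, hw2]
    have hxa : rcl F x = rcl F a :=
      nxt_inj hF hrow hcol (rcl_mem_classesOf x) (rcl_mem_classesOf a) heq
    exact ⟨rcl_mem_classesOf a, hZ,
      ⟨(x, z), hxz, by rw [← hxa]; exact mem_rcl_self hF x, hz⟩⟩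

end AssocScheme
namespace AssocScheme

set_option linter.unusedSectionVars false

variable {V : Type*} [Fintype V] {C : AssocScheme V} {E F : Set (V × V)}

lemma uniqCol_transp {g : Set (V × V)} (h : UniqRow F g) : UniqCol F (transp g) := by
  intro b
  rw [show {Y : Set V | (Y, rcl F b) ∈ quotRel F (transp g)}
      = {Y : Set V | (rcl F b, Y) ∈ quotRel F g} from by
    ext Y; simp only [Set.mem_setOf_eq]; exact quotRel_transp_mem]
  exact h b

lemma nxt_classes (hF : IsSchemeEquiv C F) {g : Set (V × V)} (hrow : UniqRow F g)
    {A : Set V} (hA : A ∈ classesOf F) : nxtF F g A ∈ classesOf F := by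
  obtain ⟨a, ha⟩ := classesOf_nonempty hF hA
  rw [classesOf_eq_rcl hF hA ha]
  exact nxt_mem_classesOf (hrow a)

lemma nxt_iter_classes (hF : IsSchemeEquiv C F) {g : Set (V × V)} (hrow : UniqRow F g)
    (k : ℕ) {A : Set V} (hA : A ∈ classesOf F) : (nxtF F g)^[k] A ∈ classesOf F := by
  induction k generalizing A with
  | zero => exact hA
  | succ k ih =>
    rw [Function.iterate_succ_apply]
    exact ih (nxt_classes hF hrow hA)

lemma nxt_prv (hF : IsSchemeEquiv C F) {t : Set (V × V)} (hrow : UniqRow F t)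
    (hcol : UniqCol F t) {B : Set V} (hB : B ∈ classesOf F) :
    nxtF F t (nxtF F (transp t) B) = B := by
  have hrowT : UniqRow F (transp t) := uniqRow_transp hcol
  obtain ⟨b, hb⟩ := classesOf_nonempty hF hB
  have eB : B = rcl F b := classesOf_eq_rcl hF hB hb
  have h1 : (B, nxtF F (transp t) B) ∈ quotRel F (transp t) := by
    rw [eB]; exact nxt_mem_quot (hrowT b)
  have h2 : (nxtF F (transp t) B, B) ∈ quotRel F t := quotRel_transp_mem.mp h1
  have hcl : nxtF F (transp t) B ∈ classesOf F := h2.1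
  obtain ⟨w, hw⟩ := classesOf_nonempty hF hcl
  have ew : nxtF F (transp t) B = rcl F w := classesOf_eq_rcl hF hcl hw
  rw [ew] at h2 ⊢
  exact ((nxt_spec (hrow w) B).mp h2).symm

lemma prv_nxt (hF : IsSchemeEquiv C F) {t : Set (V × V)} (hrow : UniqRow F t)
    (hcol : UniqCol F t) {A : Set V} (hA : A ∈ classesOf F) :
    nxtF F (transp t) (nxtF F t A) = A := by
  have hrowT : UniqRow F (transp t) := uniqRow_transp hcol
  obtain ⟨a, ha⟩ := classesOf_nonempty hF hA
  have eA : A = rcl F a := classesOf_eq_rcl hF hA ha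
  have h1 : (A, nxtF F t A) ∈ quotRel F t := by
    rw [eA]; exact nxt_mem_quot (hrow a)
  have h2 : (nxtF F t A, A) ∈ quotRel F (transp t) := quotRel_transp_mem.mpr h1
  have hcl : nxtF F t A ∈ classesOf F := h2.1
  obtain ⟨w, hw⟩ := classesOf_nonempty hF hcl
  have ew : nxtF F t A = rcl F w := classesOf_eq_rcl hF hcl hw
  rw [ew] at h2 ⊢
  exact ((nxt_spec (hrowT w) A).mp h2).symm

lemma comp_subset_E (hE : IsSchemeEquiv C E) {R S : Set (V × V)} (hR : R ⊆ E) (hS : S ⊆ E) :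
    comp R S ⊆ E := by
  rintro ⟨x, z⟩ ⟨w, h1, h2⟩
  exact hE.2.trans (hR h1) (hS h2)

/-- iterated powers of the thin basis relation -/
lemma gpow_exists (hE : IsSchemeEquiv C E) (hF : IsSchemeEquiv C F)
    {t : Set (V × V)} (ht : t ∈ C.classes) (htE : t ⊆ E)
    (hrow : UniqRow F t) (hcol : UniqCol F t) :
    ∀ k : ℕ, ∃ g ∈ C.classes, g ⊆ E ∧
      (∀ A B : Set V, A ∈ classesOf F → B ∈ classesOf F →
        ((A, B) ∈ quotRel F g ↔ B = (nxtF F t)^[k] A)) ∧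
      (∀ A B : Set V, A ∈ classesOf F → B ∈ classesOf F →
        ((A, B) ∈ quotRel F g ↔ A = (nxtF F (transp t))^[k] B)) := by
  have hrowT : UniqRow F (transp t) := uniqRow_transp hcol
  have hcolT : UniqCol F (transp t) := uniqCol_transp hrow
  intro k
  induction k with
  | zero =>
    refine ⟨diag V, C.diag_mem, diag_subset hE, ?_, ?_⟩
    · intro A B hA hB
      simp only [Function.iterate_zero, id_eq]
      constructor
      · rintro ⟨-, -, ⟨⟨w, w'⟩, hww', hw, hw'⟩⟩
        replace hw : w ∈ A := hw
        replace hw' : w' ∈ B := hw'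
        have : w = w' := hww'
        subst this
        rw [classesOf_eq_rcl hF hA hw, classesOf_eq_rcl hF hB hw']
      · intro h
        obtain ⟨a, ha⟩ := classesOf_nonempty hF hA
        exact ⟨hA, hB, ⟨(a, a), rfl, ha, by rw [h]; exact ha⟩⟩
    · intro A B hA hB
      simp only [Function.iterate_zero, id_eq]
      constructor
      · rintro ⟨-, -, ⟨⟨w, w'⟩, hww', hw, hw'⟩⟩
        replace hw : w ∈ A := hw
        replace hw' : w' ∈ B := hw'
        have : w = w' := hww'
        subst this
        rw [classesOf_eq_rcl hF hA hw, classesOf_eq_rcl hF hB hw']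
      · intro h
        obtain ⟨b, hb⟩ := classesOf_nonempty hF hB
        exact ⟨hA, hB, ⟨(b, b), rfl, by rw [h]; exact hb, hb⟩⟩
  | succ k ih =>
    obtain ⟨g, hgc, hgE, IHg, IHcog⟩ := ih
    obtain ⟨g', hg'c, hsub⟩ := exists_basis_in_comp hgc ht
    have hg'E : g' ⊆ E := hsub.trans (comp_subset_E hE hgE htE)
    refine ⟨g', hg'c, hg'E, ?_, ?_⟩
    · intro A B hA hB
      obtain ⟨a, ha⟩ := classesOf_nonempty hF hA
      have eA : A = rcl F a := classesOf_eq_rcl hF hA ha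
      rw [eA, shiftR hF hgc ht hg'c hsub hrow hcol a B hB, ← eA]
      have hprvB : nxtF F (transp t) B ∈ classesOf F := nxt_classes hF hrowT hB
      rw [IHg A (nxtF F (transp t) B) hA hprvB]
      constructor
      · intro h
        have hBeq : B = nxtF F t (nxtF F (transp t) B) := (nxt_prv hF hrow hcol hB).symm
        rw [hBeq, h]
        exact (Function.iterate_succ_apply' _ _ _).symm
      · intro h
        rw [h, Function.iterate_succ_apply']
        exact prv_nxt hF hrow hcol (nxt_iter_classes hF hrow k hA)
    · intro A B hA hB
      obtain ⟨b, hb⟩ := classesOf_nonempty hF hB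
      have eB : B = rcl F b := classesOf_eq_rcl hF hB hb
      have hsubT : transp g' ⊆ comp (transp t) (transp g) := by
        rw [← transp_comp]
        intro z hz
        exact hsub hz
      have hstep := shiftL hF (C.transp_mem g hgc) (C.transp_mem t ht)
        (C.transp_mem g' hg'c) hsubT hrowT hcolT b A hA
      rw [show ((A, B) ∈ quotRel F g' ↔ (B, A) ∈ quotRel F (transp g')) from
        quotRel_transp_mem.symm, eB, hstep]
      have hprvB : nxtF F (transp t) (rcl F b) ∈ classesOf F :=
        nxt_classes hF hrowT (rcl_mem_classesOf b)
      rw [show ((nxtF F (transp t) (rcl F b), A) ∈ quotRel F (transp g)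
          ↔ (A, nxtF F (transp t) (rcl F b)) ∈ quotRel F g) from quotRel_transp_mem]
      rw [IHcog A (nxtF F (transp t) (rcl F b)) hA hprvB]
      rw [Function.iterate_succ_apply]
  
end AssocScheme
namespace AssocScheme

set_option linter.unusedSectionVars false

variable {V : Type*} [Fintype V] {C : AssocScheme V} {E F : Set (V × V)}

lemma nonempty_V (C : AssocScheme V) : Nonempty V :=
  ⟨(C.nonempty_mem _ C.diag_mem).some.1⟩

lemma iter_prv_nxt (hF : IsSchemeEquiv C F) {t : Set (V × V)} (hrow : UniqRow F t)
    (hcol : UniqCol F t) (k : ℕ) {A : Set V} (hA : A ∈ classesOf F) :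
    (nxtF F (transp t))^[k] ((nxtF F t)^[k] A) = A := by
  induction k generalizing A with
  | zero => rfl
  | succ k ih =>
    rw [Function.iterate_succ_apply' (nxtF F t), Function.iterate_succ_apply]
    rw [prv_nxt hF hrow hcol (nxt_iter_classes hF hrow k hA)]
    exact ih hA

lemma iter_cancel (hF : IsSchemeEquiv C F) {t : Set (V × V)} (hrow : UniqRow F t)
    (hcol : UniqCol F t) (k : ℕ) {A A' : Set V} (hA : A ∈ classesOf F)
    (hA' : A' ∈ classesOf F) (h : (nxtF F t)^[k] A = (nxtF F t)^[k] A') : A = A' := by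
  have h1 := iter_prv_nxt hF hrow hcol k hA
  have h2 := iter_prv_nxt hF hrow hcol k hA'
  rw [← h1, ← h2, h]

lemma period_exists (hF : IsSchemeEquiv C F) {t : Set (V × V)} (hrow : UniqRow F t)
    (hcol : UniqCol F t) (u : V) :
    ∃ N, 0 < N ∧ (nxtF F t)^[N] (rcl F u) = rcl F u := by
  obtain ⟨i, j, hne, heq⟩ :=
    Finite.exists_ne_map_eq_of_infinite (fun k : ℕ => (nxtF F t)^[k] (rcl F u))
  rcases Nat.lt_or_ge i j with hlt | hge
  · refine ⟨j - i, Nat.sub_pos_of_lt hlt, ?_⟩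
    have hj : j = i + (j - i) := by omega
    rw [hj, Function.iterate_add_apply] at heq
    exact (iter_cancel hF hrow hcol i
      (nxt_iter_classes hF hrow _ (rcl_mem_classesOf u)) (rcl_mem_classesOf u) heq.symm)
  · have hlt : j < i := by omega
    refine ⟨i - j, Nat.sub_pos_of_lt hlt, ?_⟩
    have hi : i = j + (i - j) := by omega
    rw [hi, Function.iterate_add_apply] at heq
    exact (iter_cancel hF hrow hcol j
      (nxt_iter_classes hF hrow _ (rcl_mem_classesOf u)) (rcl_mem_classesOf u) heq)

lemma period_mul {f : Set V → Set V} {A : Set V} {N : ℕ} (h : f^[N] A = A) :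
    ∀ c : ℕ, f^[N * c] A = A := by
  intro c
  induction c with
  | zero => rfl
  | succ c ih =>
    have : N * (c + 1) = N * c + N := by ring
    rw [this, Function.iterate_add_apply, h, ih]

lemma iterate_mod {f : Set V → Set V} {A : Set V} {N : ℕ} (hN : 0 < N) (h : f^[N] A = A)
    (k : ℕ) : f^[k] A = f^[k % N] A := by
  conv_lhs => rw [show k = k % N + N * (k / N) by rw [Nat.mod_add_div]]
  rw [Function.iterate_add_apply, period_mul h]

/-- The orbit equivalence of a relatively thin relation is a strictly larger good parabolic. -/
lemma orbit_parabolic (hE : IsSchemeEquiv C E) (hF : IsSchemeEquiv C F)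
    {t : Set (V × V)} (ht : t ∈ C.classes) (htE : t ⊆ E) (hFE : F ⊆ E)
    (htF : t ∩ F = ∅) (hrow : UniqRow F t) (hcol : UniqCol F t) :
    ∃ (F' : Set (V × V)) (m : ℕ), IsSchemeEquiv C F' ∧ F ⊆ F' ∧ F' ⊆ E ∧ F ≠ F' ∧
      0 < m ∧
      (∀ A ∈ classesOf F, (nxtF F t)^[m] A = A) ∧
      (∀ (u : V) (k l : ℕ), k < m → l < m →
        (nxtF F t)^[k] (rcl F u) = (nxtF F t)^[l] (rcl F u) → k = l) ∧
      (∀ u y : V, y ∈ rcl F' u ↔ ∃ k, k < m ∧ rcl F y = (nxtF F t)^[k] (rcl F u)) ∧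
      (∀ u : V, (rcl F' u).ncard = m * (rcl F u).ncard) := by
  classical
  set nt := nxtF F t with hnt
  set F' : Set (V × V) := {q : V × V | ∃ k : ℕ, rcl F q.2 = nt^[k] (rcl F q.1)} with hF'def
  have hmemF' : ∀ x y : V, ((x, y) ∈ F' ↔ ∃ k : ℕ, rcl F y = nt^[k] (rcl F x)) := by
    intro x y; exact Iff.rfl
  -- equivalence
  have hrefl : ∀ x : V, (x, x) ∈ F' := fun x => ⟨0, rfl⟩
  have htrans : ∀ {x y z : V}, (x, y) ∈ F' → (y, z) ∈ F' → (x, z) ∈ F' := by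
    rintro x y z ⟨k, hk⟩ ⟨l, hl⟩
    exact ⟨l + k, by rw [hl, hk, ← Function.iterate_add_apply]⟩
  have hsymm : ∀ {x y : V}, (x, y) ∈ F' → (y, x) ∈ F' := by
    rintro x y ⟨k, hk⟩
    obtain ⟨N, hN0, hNper⟩ := period_exists hF hrow hcol x
    refine ⟨N * (k + 1) - k, ?_⟩
    rw [hk, ← Function.iterate_add_apply]
    have harith : N * (k + 1) - k + k = N * (k + 1) := by
      have : k ≤ N * (k + 1) := by nlinarith
      omega
    rw [harith]
    exact (period_mul hNper (k + 1)).symm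
  have hequiv : Equivalence (fun u v : V => (u, v) ∈ F') :=
    ⟨hrefl, fun h => hsymm h, fun h1 h2 => htrans h1 h2⟩
  -- union of basis relations
  have hclasses : ∀ {x y : V}, (x, y) ∈ F' → C.cls (x, y) ⊆ F' := by
    rintro x y ⟨k, hk⟩
    obtain ⟨g, hgc, hgE, hGg, hGcog⟩ := gpow_exists hE hF ht htE hrow hcol k
    have hmemg : (rcl F x, rcl F y) ∈ quotRel F g :=
      (hGg (rcl F x) (rcl F y) (rcl_mem_classesOf x) (rcl_mem_classesOf y)).mpr hk
    intro ⟨x', y'⟩ hx'y'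
    have h1 : (rcl F x', rcl F y') ∈ quotRel F (C.cls (x, y)) :=
      mem_quotRel_of_mem hF hx'y'
    have h2 : (rcl F x, rcl F y) ∈ quotRel F (C.cls (x, y)) :=
      mem_quotRel_of_mem hF (C.mem_cls (x, y))
    have hq := quot_eq_of_mem hF (C.cls_mem_classes (x, y)) hgc h2 hmemg
    rw [hq] at h1
    exact ⟨k, (hGg (rcl F x') (rcl F y') (rcl_mem_classesOf x') (rcl_mem_classesOf y')).mp h1⟩
  have hunion : ∃ D ⊆ C.classes, F' = ⋃₀ D := by
    refine ⟨{s ∈ C.classes | s ⊆ F'}, fun s hs => hs.1, ?_⟩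
    ext ⟨x, y⟩
    constructor
    · intro h
      exact ⟨C.cls (x, y), ⟨C.cls_mem_classes _, hclasses h⟩, C.mem_cls _⟩
    · rintro ⟨s, ⟨-, hsub⟩, hmem⟩
      exact hsub hmem
  have hF' : IsSchemeEquiv C F' := ⟨hunion, hequiv⟩
  -- F ⊆ F'
  have hFF' : F ⊆ F' := by
    rintro ⟨x, y⟩ h
    exact ⟨0, (rcl_eq_of_rel hF h).symm⟩
  -- F' ⊆ E
  have hF'E : F' ⊆ E := by
    rintro ⟨x, y⟩ ⟨k, hk⟩
    obtain ⟨g, hgc, hgE, hGg, hGcog⟩ := gpow_exists hE hF ht htE hrow hcol k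
    have hmemg : (rcl F x, rcl F y) ∈ quotRel F g :=
      (hGg (rcl F x) (rcl F y) (rcl_mem_classesOf x) (rcl_mem_classesOf y)).mpr hk
    obtain ⟨-, -, ⟨⟨w, w'⟩, hww', hw, hw'⟩⟩ := hmemg
    replace hw : w ∈ rcl F x := hw
    replace hw' : w' ∈ rcl F y := hw'
    exact hE.2.trans (hFE hw) (hE.2.trans (hgE hww') (hE.2.symm (hFE hw')))
  -- nt moves every class
  have hmove : ∀ u : V, nt (rcl F u) ≠ rcl F u := by
    intro u heq
    have hq : (rcl F u, nt (rcl F u)) ∈ quotRel F t := nxt_mem_quot (hrow u)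
    rw [heq] at hq
    obtain ⟨-, -, ⟨⟨w, w'⟩, hww', hw, hw'⟩⟩ := hq
    replace hw : w ∈ rcl F u := hw
    replace hw' : w' ∈ rcl F u := hw'
    have : (w, w') ∈ F := rel_of_mem_rcl hF hw hw'
    have hcontra : (t ∩ F).Nonempty := ⟨(w, w'), hww', this⟩
    rw [htF] at hcontra
    exact Set.not_nonempty_empty hcontra
  -- F ≠ F'
  have hneq : F ≠ F' := by
    intro heq
    obtain ⟨u⟩ := nonempty_V C
    have hntcl : nt (rcl F u) ∈ classesOf F := nxt_mem_classesOf (hrow u)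
    obtain ⟨z, hz⟩ := classesOf_nonempty hF hntcl
    have h1 : (u, z) ∈ F' := ⟨1, by
      show rcl F z = nt^[1] (rcl F u)
      rw [Function.iterate_one]
      exact (classesOf_eq_rcl hF hntcl hz).symm⟩
    rw [← heq] at h1
    have : z ∈ rcl F u := h1
    have hzz : z ∈ nt (rcl F u) ∩ rcl F u := ⟨hz, this⟩
    rcases classes_disjoint' hF hntcl (rcl_mem_classesOf u) with hc | hc
    · exact hmove u hc
    · rw [hc] at hzz; exact hzz
  -- minimal periods
  have hper : ∀ u : V, ∃ N, 0 < N ∧ nt^[N] (rcl F u) = rcl F u :=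
    fun u => period_exists hF hrow hcol u
  set mf : V → ℕ := fun u => Nat.find (hper u) with hmf
  have hmf_spec : ∀ u, 0 < mf u ∧ nt^[mf u] (rcl F u) = rcl F u := fun u => Nat.find_spec (hper u)
  have hmf_min : ∀ u, ∀ d, 0 < d → nt^[d] (rcl F u) = rcl F u → mf u ≤ d := by
    intro u d hd hdper
    exact Nat.find_min' (hper u) ⟨hd, hdper⟩
  -- orbit sets
  have horb_inj : ∀ u, ∀ k l : ℕ, k < mf u → l < mf u →
      nt^[k] (rcl F u) = nt^[l] (rcl F u) → k = l := by
    intro u k l hk hl heq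
    by_contra hne
    rcases Nat.lt_or_ge k l with hlt | hge
    · have : l = k + (l - k) := by omega
      rw [this, Function.iterate_add_apply] at heq
      have hcan := iter_cancel hF hrow hcol k (rcl_mem_classesOf u)
        (nxt_iter_classes hF hrow _ (rcl_mem_classesOf u)) heq
      have := hmf_min u (l - k) (by omega) hcan.symm
      omega
    · have hlt : l < k := by omega
      have : k = l + (k - l) := by omega
      rw [this, Function.iterate_add_apply] at heq
      have hcan := iter_cancel hF hrow hcol l
        (nxt_iter_classes hF hrow _ (rcl_mem_classesOf u)) (rcl_mem_classesOf u) heq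
      have := hmf_min u (k - l) (by omega) hcan
      omega
  have hrclF' : ∀ u y : V, y ∈ rcl F' u ↔ ∃ k, k < mf u ∧ rcl F y = nt^[k] (rcl F u) := by
    intro u y
    constructor
    · intro h
      obtain ⟨k, hk⟩ := (h : (u, y) ∈ F')
      refine ⟨k % mf u, Nat.mod_lt _ (hmf_spec u).1, ?_⟩
      rw [hk, iterate_mod (hmf_spec u).1 (hmf_spec u).2]
    · rintro ⟨k, -, hk⟩
      exact ⟨k, hk⟩
  -- orbit set cardinality
  have horb_card : ∀ u : V, (rcl F' u).ncard = mf u * (rcl F u).ncard := by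
    intro u
    have himg : ({B : Set V | ∃ k, k < mf u ∧ B = nt^[k] (rcl F u)}).ncard = mf u := by
      have : {B : Set V | ∃ k, k < mf u ∧ B = nt^[k] (rcl F u)}
          = ↑((Finset.range (mf u)).image (fun k => nt^[k] (rcl F u))) := by
        ext B
        simp only [Set.mem_setOf_eq, Finset.coe_image, Set.mem_image, Finset.mem_coe,
          Finset.mem_range]
        constructor
        · rintro ⟨k, hk, rfl⟩; exact ⟨k, hk, rfl⟩
        · rintro ⟨k, hk, rfl⟩; exact ⟨k, hk, rfl⟩
      rw [this, Set.ncard_coe_finset, Finset.card_image_of_injOn, Finset.card_range]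
      intro k hk l hl heq
      exact horb_inj u k l (Finset.mem_range.mp hk) (Finset.mem_range.mp hl) heq
    rw [← himg]
    apply ncard_partition
    · rintro A ⟨k, -, rfl⟩ B ⟨l, -, rfl⟩ hAB
      rcases classes_disjoint' hF (nxt_iter_classes hF hrow k (rcl_mem_classesOf u))
        (nxt_iter_classes hF hrow l (rcl_mem_classesOf u)) with h | h
      · exact absurd h hAB
      · exact h
    · intro y hy
      obtain ⟨k, hk, hky⟩ := (hrclF' u y).mp hy
      refine ⟨nt^[k] (rcl F u), ⟨k, hk, rfl⟩, ?_⟩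
      rw [← hky]
      exact mem_rcl_self hF y
    · rintro A ⟨k, hk, rfl⟩
      have hAcl : nt^[k] (rcl F u) ∈ classesOf F :=
        nxt_iter_classes hF hrow k (rcl_mem_classesOf u)
      have hsub : nt^[k] (rcl F u) ⊆ rcl F' u := by
        intro z hz
        rw [hrclF' u z]
        exact ⟨k, hk, (classesOf_eq_rcl hF hAcl hz).symm⟩
      rw [Set.inter_eq_self_of_subset_right hsub]
      obtain ⟨w, hw⟩ := classesOf_nonempty hF hAcl
      rw [classesOf_eq_rcl hF hAcl hw]
      exact rcl_ncard_const hF w u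
  -- uniformity of the period
  obtain ⟨u₀⟩ := nonempty_V C
  have hmf_const : ∀ u : V, mf u = mf u₀ := by
    intro u
    have h1 := horb_card u
    have h2 := horb_card u₀
    rw [rcl_ncard_const hF' u u₀, h2, rcl_ncard_const hF u u₀] at h1
    have hqpos : 0 < (rcl F u₀).ncard :=
      (Set.ncard_pos (Set.toFinite _)).mpr ⟨u₀, mem_rcl_self hF u₀⟩
    exact Nat.eq_of_mul_eq_mul_right hqpos h1.symm
  refine ⟨F', mf u₀, hF', hFF', hF'E, hneq, (hmf_spec u₀).1, ?_, ?_, ?_, ?_⟩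
  · intro A hA
    obtain ⟨a, ha⟩ := classesOf_nonempty hF hA
    rw [classesOf_eq_rcl hF hA ha, ← hmf_const a]
    exact (hmf_spec a).2
  · intro u k l hk hl heq
    rw [← hmf_const u] at hk hl
    exact horb_inj u k l hk hl heq
  · intro u y
    rw [hrclF' u y, hmf_const u]
  · intro u
    rw [horb_card u, hmf_const u]

end AssocScheme
namespace AssocScheme

set_option linter.unusedSectionVars false

variable {V : Type*} [Fintype V] {C : AssocScheme V} {p : ℕ} {E F : Set (V × V)} {X : Set V}

lemma transp_transp (R : Set (V × V)) : transp (transp R) = R := by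
  ext ⟨a, b⟩
  exact Iff.rfl

lemma uniqRow_of_graph (hF : IsSchemeEquiv C F) {g : Set (V × V)} {f : Set V → Set V}
    (hGg : ∀ A B : Set V, A ∈ classesOf F → B ∈ classesOf F →
      ((A, B) ∈ quotRel F g ↔ B = f A))
    (hfcl : ∀ A ∈ classesOf F, f A ∈ classesOf F) : UniqRow F g := by
  intro a
  have hset : {Z : Set V | (rcl F a, Z) ∈ quotRel F g} = {f (rcl F a)} := by
    ext Z
    simp only [Set.mem_setOf_eq, Set.mem_singleton_iff]
    constructor
    · intro h
      exact (hGg _ _ (rcl_mem_classesOf a) h.2.1).mp h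
    · intro h
      subst h
      exact (hGg _ _ (rcl_mem_classesOf a) (hfcl _ (rcl_mem_classesOf a))).mpr rfl
  rw [hset]
  exact Set.ncard_singleton _

lemma uniqCol_of_cograph (hF : IsSchemeEquiv C F) {g : Set (V × V)} {f' : Set V → Set V}
    (hGcog : ∀ A B : Set V, A ∈ classesOf F → B ∈ classesOf F →
      ((A, B) ∈ quotRel F g ↔ A = f' B))
    (hfcl : ∀ B ∈ classesOf F, f' B ∈ classesOf F) : UniqCol F g := by
  intro b
  have hset : {Y : Set V | (Y, rcl F b) ∈ quotRel F g} = {f' (rcl F b)} := by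
    ext Y
    simp only [Set.mem_setOf_eq, Set.mem_singleton_iff]
    constructor
    · intro h
      exact (hGcog _ _ h.1 (rcl_mem_classesOf b)).mp h
    · intro h
      subst h
      exact (hGcog _ _ (hfcl _ (rcl_mem_classesOf b)) (rcl_mem_classesOf b)).mpr rfl
  rw [hset]
  exact Set.ncard_singleton _

lemma nxtF_eq_of_graph (hF : IsSchemeEquiv C F) {g : Set (V × V)} {f : Set V → Set V}
    (hGg : ∀ A B : Set V, A ∈ classesOf F → B ∈ classesOf F →
      ((A, B) ∈ quotRel F g ↔ B = f A))
    (hfcl : ∀ A ∈ classesOf F, f A ∈ classesOf F)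
    {A : Set V} (hA : A ∈ classesOf F) : nxtF F g A = f A := by
  have hrowg : UniqRow F g := uniqRow_of_graph hF hGg hfcl
  obtain ⟨a, ha⟩ := classesOf_nonempty hF hA
  have eA : A = rcl F a := classesOf_eq_rcl hF hA ha
  subst eA
  have h1 : (rcl F a, nxtF F g (rcl F a)) ∈ quotRel F g := nxt_mem_quot (hrowg a)
  exact (hGg _ _ (rcl_mem_classesOf a) h1.2.1).mp h1

/-- shifted basis relation realizing a double shift of the support of `r` -/
lemma shift_basis_exists (hE : IsSchemeEquiv C E) (hF : IsSchemeEquiv C F)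
    {t : Set (V × V)} (ht : t ∈ C.classes) (htE : t ⊆ E)
    (hrow : UniqRow F t) (hcol : UniqCol F t)
    {r : Set (V × V)} (hr : r ∈ C.classes) (a b : ℕ) :
    ∃ s ∈ C.classes, ∀ A B : Set V, A ∈ classesOf F → B ∈ classesOf F →
      ((A, B) ∈ quotRel F s ↔
        ((nxtF F t)^[a] A, (nxtF F t)^[b] B) ∈ quotRel F r) := by
  have hrowT : UniqRow F (transp t) := uniqRow_transp hcol
  obtain ⟨ga, hgac, hgaE, hGa, hGacog⟩ := gpow_exists hE hF ht htE hrow hcol a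
  obtain ⟨gb, hgbc, hgbE, hGb, hGbcog⟩ := gpow_exists hE hF ht htE hrow hcol b
  have hfacl : ∀ A ∈ classesOf F, (nxtF F t)^[a] A ∈ classesOf F :=
    fun A hA => nxt_iter_classes hF hrow a hA
  have hfbcl : ∀ A ∈ classesOf F, (nxtF F t)^[b] A ∈ classesOf F :=
    fun A hA => nxt_iter_classes hF hrow b hA
  have hfbcl' : ∀ A ∈ classesOf F, (nxtF F (transp t))^[a] A ∈ classesOf F :=
    fun A hA => nxt_iter_classes hF hrowT a hA
  have hfbcl'' : ∀ A ∈ classesOf F, (nxtF F (transp t))^[b] A ∈ classesOf F :=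
    fun A hA => nxt_iter_classes hF hrowT b hA
  have hUrow_ga : UniqRow F ga := uniqRow_of_graph hF hGa hfacl
  have hUcol_ga : UniqCol F ga := uniqCol_of_cograph hF hGacog hfbcl'
  have hUrow_gb : UniqRow F gb := uniqRow_of_graph hF hGb hfbcl
  have hUcol_gb : UniqCol F gb := uniqCol_of_cograph hF hGbcog hfbcl''
  -- step 1 : w₁ ⊆ comp r (transp gb)
  obtain ⟨w₁, hw₁c, hw₁sub⟩ := exists_basis_in_comp hr (C.transp_mem gb hgbc)
  have hstep1 : ∀ (a' : V) (Z : Set V), Z ∈ classesOf F →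
      ((rcl F a', Z) ∈ quotRel F w₁ ↔ (rcl F a', (nxtF F t)^[b] Z) ∈ quotRel F r) := by
    intro a' Z hZ
    have h := shiftR hF hr (C.transp_mem gb hgbc) hw₁c hw₁sub
      (uniqRow_transp hUcol_gb) (uniqCol_transp hUrow_gb) a' Z hZ
    rw [h]
    have : nxtF F (transp (transp gb)) Z = (nxtF F t)^[b] Z := by
      rw [transp_transp]
      exact nxtF_eq_of_graph hF hGb hfbcl hZ
    rw [this]
  -- step 2 : s ⊆ comp ga w₁
  obtain ⟨s, hsc, hssub⟩ := exists_basis_in_comp hgac hw₁c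
  refine ⟨s, hsc, ?_⟩
  intro A B hA hB
  obtain ⟨a', ha'⟩ := classesOf_nonempty hF hA
  have eA : A = rcl F a' := classesOf_eq_rcl hF hA ha'
  have hstep2 := shiftL hF hw₁c hgac hsc hssub hUrow_ga hUcol_ga a' B hB
  rw [eA, hstep2]
  have hga : nxtF F ga (rcl F a') = (nxtF F t)^[a] (rcl F a') :=
    nxtF_eq_of_graph hF hGa hfacl (rcl_mem_classesOf a')
  rw [hga]
  have hnacl : (nxtF F t)^[a] (rcl F a') ∈ classesOf F :=
    hfacl _ (rcl_mem_classesOf a')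
  obtain ⟨a'', ha''⟩ := classesOf_nonempty hF hnacl
  have eA2 : (nxtF F t)^[a] (rcl F a') = rcl F a'' := classesOf_eq_rcl hF hnacl ha''
  rw [eA2, hstep1 a'' B hB, ← eA2]

/-- The orbit parabolic of a thin relation over a good parabolic is good. -/
lemma good_step (hp : p.Prime) (hE : IsSchemeEquiv C E) (hX : X ∈ classesOf E)
    (Hq : QuotPow C p E) (Hr : ResPow C p X) (hG : GoodPar C p E F) (hne : F ≠ E) :
    ∃ F' : Set (V × V), GoodPar C p E F' ∧ F ⊆ F' ∧ F ≠ F' := by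
  classical
  obtain ⟨t, htc, htE, htF, hrowS, hcolS⟩ := thin_exists hp hE hX Hq Hr hG hne
  have hrow : UniqRow F t := hrowS
  have hcol : UniqCol F t := hcolS
  obtain ⟨hF, hFE, HB⟩ := hG
  obtain ⟨F', m, hF', hFF', hF'E, hFneF', hm0, hperiod, hinj, hrcl, hsize⟩ :=
    orbit_parabolic hE hF htc htE hFE htF hrow hcol
  haveI : NeZero m := ⟨hm0.ne'⟩
  -- m is a p-power
  obtain ⟨x₀, hX0⟩ := hX
  have hXc : X ∈ classesOf E := ⟨x₀, hX0⟩
  have hqF' : ∃ k, (rcl F' x₀).ncard = p ^ k := by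
    obtain ⟨e, he⟩ := q_pow hE hXc Hr
    have := X_partition hE hF' hF'E hXc x₀
    exact pow_of_dvd_pow hp ⟨_, by rw [← he, this, Nat.mul_comm]⟩
  obtain ⟨kF', hkF'⟩ := hqF'
  have hmpow : ∃ k, m = p ^ k := by
    refine pow_of_dvd_pow hp (K := kF') ⟨(rcl F x₀).ncard, ?_⟩
    rw [← hkF', hsize x₀]
  obtain ⟨km, hkm⟩ := hmpow
  refine ⟨F', ⟨hF', hF'E, ?_⟩, hFF', hFneF'⟩
  intro r hr u v huv
  -- the stabilizer subgroup
  set nt := nxtF F t with hnt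
  have hA₀ : rcl F u ∈ classesOf F := rcl_mem_classesOf u
  have hB₀ : rcl F v ∈ classesOf F := rcl_mem_classesOf v
  have hbase : (rcl F u, rcl F v) ∈ quotRel F r := mem_quotRel_of_mem hF huv
  have hkey : ∀ a b : ℕ, (nt^[a] (rcl F u), nt^[b] (rcl F v)) ∈ quotRel F r →
      (∀ A B : Set V, A ∈ classesOf F → B ∈ classesOf F →
        ((A, B) ∈ quotRel F r ↔ (nt^[a] A, nt^[b] B) ∈ quotRel F r)) := by
    intro a b hcond
    obtain ⟨s, hsc, hs⟩ := shift_basis_exists hE hF htc htE hrow hcol hr a b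
    have hsmem : (rcl F u, rcl F v) ∈ quotRel F s := (hs _ _ hA₀ hB₀).mpr hcond
    have heq := quot_eq_of_mem hF hsc hr hsmem hbase
    intro A B hA hB
    have hiff := hs A B hA hB
    rw [heq] at hiff
    exact hiff
  -- iterate exponent arithmetic
  have hiter_mod : ∀ (k : ℕ) (A : Set V), A ∈ classesOf F → nt^[k] A = nt^[k % m] A := by
    intro k A hA
    exact iterate_mod hm0 (hperiod A hA) k
  have hiter_cls : ∀ (k : ℕ) (A : Set V), A ∈ classesOf F → nt^[k] A ∈ classesOf F :=
    fun k A hA => nxt_iter_classes hF hrow k hA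
  -- the stabilizer as an additive subgroup of (ZMod m)²
  set Hcond : ZMod m × ZMod m → Prop :=
    fun ab => (nt^[ab.1.val] (rcl F u), nt^[ab.2.val] (rcl F v)) ∈ quotRel F r with hHcond
  have hzero : Hcond (0, 0) := by
    rw [hHcond]
    simp only [ZMod.val_zero, Function.iterate_zero, id_eq]
    exact hbase
  have hadd : ∀ {x y : ZMod m × ZMod m}, Hcond x → Hcond y → Hcond (x + y) := by
    rintro ⟨α, β⟩ ⟨α', β'⟩ hx hy
    have hP := hkey _ _ hx
    show (nt^[(α + α').val] (rcl F u), nt^[(β + β').val] (rcl F v)) ∈ quotRel F r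
    have e1 : nt^[(α + α').val] (rcl F u) = nt^[α.val] (nt^[α'.val] (rcl F u)) := by
      rw [← Function.iterate_add_apply, ZMod.val_add]
      exact (hiter_mod _ _ hA₀).symm
    have e2 : nt^[(β + β').val] (rcl F v) = nt^[β.val] (nt^[β'.val] (rcl F v)) := by
      rw [← Function.iterate_add_apply, ZMod.val_add]
      exact (hiter_mod _ _ hB₀).symm
    rw [e1, e2]
    exact (hP _ _ (hiter_cls _ _ hA₀) (hiter_cls _ _ hB₀)).mp hy
  have hneg : ∀ {x : ZMod m × ZMod m}, Hcond x → Hcond (-x) := by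
    rintro ⟨α, β⟩ hx
    have hP := hkey _ _ hx
    show (nt^[(-α).val] (rcl F u), nt^[(-β).val] (rcl F v)) ∈ quotRel F r
    have e1 : nt^[α.val] (nt^[(-α).val] (rcl F u)) = rcl F u := by
      rw [← Function.iterate_add_apply]
      rw [hiter_mod _ _ hA₀]
      rw [show (α.val + (-α).val) % m = 0 from by
        rw [← ZMod.val_add]; simp]
      rfl
    have e2 : nt^[β.val] (nt^[(-β).val] (rcl F v)) = rcl F v := by
      rw [← Function.iterate_add_apply]
      rw [hiter_mod _ _ hB₀]
      rw [show (β.val + (-β).val) % m = 0 from by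
        rw [← ZMod.val_add]; simp]
      rfl
    have happ := hP (nt^[(-α).val] (rcl F u)) (nt^[(-β).val] (rcl F v))
      (hiter_cls _ _ hA₀) (hiter_cls _ _ hB₀)
    apply happ.mpr
    rw [e1, e2]
    exact hbase
  set H : AddSubgroup (ZMod m × ZMod m) :=
    { carrier := {ab | Hcond ab}
      zero_mem' := hzero
      add_mem' := fun hx hy => hadd hx hy
      neg_mem' := fun hx => hneg hx } with hH
  -- block count
  have hc := HB r hr u v huv
  obtain ⟨kc, hkc⟩ := hc
  have hblock : (r ∩ (rcl F' u) ×ˢ (rcl F' v)).ncard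
      = {ab : ZMod m × ZMod m | Hcond ab}.ncard * (r ∩ (rcl F u) ×ˢ (rcl F v)).ncard := by
    have himg : (((fun ab : ZMod m × ZMod m =>
        (nt^[ab.1.val] (rcl F u)) ×ˢ (nt^[ab.2.val] (rcl F v)))) ''
          {ab | Hcond ab}).ncard = {ab : ZMod m × ZMod m | Hcond ab}.ncard := by
      apply Set.ncard_image_of_injOn
      rintro ⟨α, β⟩ - ⟨α', β'⟩ - heq
      have h1 := prod_inj_of_nonempty
        (classesOf_nonempty hF (hiter_cls α.val _ hA₀))
        (classesOf_nonempty hF (hiter_cls β.val _ hB₀)) heq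
      have hα : α = α' := by
        apply ZMod.val_injective
        exact hinj u α.val α'.val (ZMod.val_lt α) (ZMod.val_lt α') h1.1
      have hβ : β = β' := by
        apply ZMod.val_injective
        exact hinj v β.val β'.val (ZMod.val_lt β) (ZMod.val_lt β') h1.2
      rw [Prod.mk.injEq]
      exact ⟨hα, hβ⟩
    rw [← himg]
    apply ncard_partition
    · rintro A ⟨⟨α, β⟩, -, rfl⟩ B ⟨⟨α', β'⟩, -, rfl⟩ hAB
      rcases classes_disjoint' hF (hiter_cls α.val _ hA₀) (hiter_cls α'.val _ hA₀)
        with h1 | h1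
      · rcases classes_disjoint' hF (hiter_cls β.val _ hB₀) (hiter_cls β'.val _ hB₀)
          with h2 | h2
        · exact absurd (show (nt^[α.val] (rcl F u)) ×ˢ (nt^[β.val] (rcl F v))
            = (nt^[α'.val] (rcl F u)) ×ˢ (nt^[β'.val] (rcl F v)) by rw [h1, h2]) hAB
        · exact prod_inter_empty_right h2
      · exact prod_inter_empty_left h1
    · rintro ⟨x, y⟩ ⟨hxy, hx, hy⟩
      obtain ⟨k, hk, hkx⟩ := (hrcl u x).mp hx
      obtain ⟨l, hl, hly⟩ := (hrcl v y).mp hy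
      have hvk : ((k : ZMod m)).val = k := ZMod.val_cast_of_lt hk
      have hvl : ((l : ZMod m)).val = l := ZMod.val_cast_of_lt hl
      refine ⟨(nt^[k] (rcl F u)) ×ˢ (nt^[l] (rcl F v)),
        ⟨((k : ZMod m), (l : ZMod m)), ?_, by
          show (nt^[((k : ZMod m)).val] (rcl F u)) ×ˢ (nt^[((l : ZMod m)).val] (rcl F v))
            = (nt^[k] (rcl F u)) ×ˢ (nt^[l] (rcl F v))
          rw [hvk, hvl]⟩, ?_, ?_⟩
      · show (nt^[((k : ZMod m)).val] (rcl F u), nt^[((l : ZMod m)).val] (rcl F v))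
          ∈ quotRel F r
        rw [hvk, hvl, ← hkx, ← hly]
        exact mem_quotRel_of_mem hF hxy
      · rw [← hkx]; exact mem_rcl_self hF x
      · rw [← hly]; exact mem_rcl_self hF y
    · rintro A ⟨⟨α, β⟩, hαβ, rfl⟩
      have hqmem : (nt^[α.val] (rcl F u), nt^[β.val] (rcl F v)) ∈ quotRel F r := hαβ
      have hsub : (nt^[α.val] (rcl F u)) ×ˢ (nt^[β.val] (rcl F v))
          ⊆ (rcl F' u) ×ˢ (rcl F' v) := by
        rintro ⟨x, y⟩ ⟨hx, hy⟩
        constructor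
        · rw [hrcl u x]
          exact ⟨α.val, ZMod.val_lt α,
            classesOf_eq_rcl hF (hiter_cls α.val _ hA₀) hx ▸ rfl⟩
        · rw [hrcl v y]
          exact ⟨β.val, ZMod.val_lt β,
            classesOf_eq_rcl hF (hiter_cls β.val _ hB₀) hy ▸ rfl⟩
      rw [Set.inter_assoc, Set.inter_eq_self_of_subset_right hsub]
      exact block_const' hF hr hqmem huv
  -- the stabilizer cardinality is a p-power
  have hHcard : ∃ k, {ab : ZMod m × ZMod m | Hcond ab}.ncard = p ^ k := by
    have h1 : {ab : ZMod m × ZMod m | Hcond ab}.ncard = Nat.card H :=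
      (Nat.card_coe_set_eq _).symm
    have h2 : Nat.card H ∣ Nat.card (ZMod m × ZMod m) :=
      AddSubgroup.card_addSubgroup_dvd_card H
    rw [Nat.card_prod, Nat.card_zmod] at h2
    have h3 : Nat.card H ∣ p ^ (km + km) := by
      rw [pow_add, ← hkm]
      exact h2
    rw [h1]
    exact pow_of_dvd_pow hp h3
  obtain ⟨kH, hkH⟩ := hHcard
  exact ⟨kH + kc, by rw [hblock, hkH, hkc, pow_add]⟩

end AssocScheme
namespace AssocScheme

set_option linter.unusedSectionVars false

variable {V : Type*} [Fintype V] {C : AssocScheme V} {p : ℕ} {E F F' : Set (V × V)} {X : Set V}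

lemma diag_schemeEquiv (C : AssocScheme V) : IsSchemeEquiv C (diag V) := by
  refine ⟨⟨{diag V}, ?_, (Set.sUnion_singleton _).symm⟩, ?_, ?_, ?_⟩
  · intro s hs
    rw [Set.mem_singleton_iff] at hs
    rw [hs]
    exact C.diag_mem
  · intro x
    exact rfl
  · intro x y h
    exact (show x = y from h).symm
  · intro x y z h1 h2
    exact (show x = y from h1).trans h2

lemma good_diag (hE : IsSchemeEquiv C E) : GoodPar C p E (diag V) := by
  refine ⟨diag_schemeEquiv C, diag_subset hE, ?_⟩
  intro r hr u v huv
  have hset : r ∩ (rcl (diag V) u) ×ˢ (rcl (diag V) v) = {(u, v)} := by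
    ext ⟨a, b⟩
    constructor
    · rintro ⟨hab, ha, hb⟩
      have h1 : u = a := ha
      have h2 : v = b := hb
      rw [Set.mem_singleton_iff, ← h1, ← h2]
    · intro h
      rw [Set.mem_singleton_iff] at h
      rw [h]
      exact ⟨huv, rfl, rfl⟩
  rw [hset, Set.ncard_singleton]
  exact ⟨0, (pow_zero p).symm⟩

lemma par_eq_of_card (hF : IsSchemeEquiv C F) (hF' : IsSchemeEquiv C F') (hsub : F ⊆ F')
    (hcard : ∀ u : V, (rcl F' u).ncard ≤ (rcl F u).ncard) : F = F' := by
  have hcl : ∀ u, rcl F u = rcl F' u := fun u =>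
    Set.eq_of_subset_of_ncard_le (fun v hv => hsub hv) (hcard u) (Set.toFinite _)
  ext ⟨u, v⟩
  constructor
  · exact fun h => hsub h
  · intro h
    have hv : v ∈ rcl F' u := h
    rw [← hcl u] at hv
    exact hv

lemma good_to_E (hp : p.Prime) (hE : IsSchemeEquiv C E) (hX : X ∈ classesOf E)
    (Hq : QuotPow C p E) (Hr : ResPow C p X) :
    ∀ d : ℕ, ∀ F : Set (V × V), GoodPar C p E F →
      (∀ u : V, X.ncard ≤ (rcl F u).ncard + d) → GoodPar C p E E := by
  obtain ⟨x₀, hX0⟩ := hX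
  have hX0' : X = rcl E x₀ := hX0
  have hXc : X ∈ classesOf E := ⟨x₀, hX0⟩
  intro d
  induction d with
  | zero =>
    intro F hG hle
    have hFeq : F = E := by
      apply par_eq_of_card hG.1 hE hG.2.1
      intro u
      have h1 : (rcl E u).ncard = X.ncard := by
        rw [hX0']
        exact rcl_ncard_const hE u x₀
      rw [h1]
      have := hle u
      omega
    rw [hFeq] at hG
    exact hG
  | succ d ih =>
    intro F hG hle
    by_cases hFE : F = E
    · rw [hFE] at hG; exact hG
    · obtain ⟨F', hG', hsub, hne'⟩ := good_step hp hE hXc Hq Hr hG hFE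
      apply ih F' hG'
      intro u
      have hlt : (rcl F u).ncard < (rcl F' u).ncard := by
        rcases Nat.lt_or_ge (rcl F u).ncard ((rcl F' u).ncard) with h | h
        · exact h
        · exfalso
          apply hne'
          apply par_eq_of_card hG.1 hG'.1 hsub
          intro w
          calc (rcl F' w).ncard = (rcl F' u).ncard := rcl_ncard_const hG'.1 w u
            _ ≤ (rcl F u).ncard := h
            _ = (rcl F w).ncard := rcl_ncard_const hG.1 u w
      have := hle u
      omega

lemma backward_dir (hp : p.Prime) (hE : IsSchemeEquiv C E) (hX : X ∈ classesOf E)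
    (Hq : QuotPow C p E) (Hr : ResPow C p X) : IsPScheme p C := by
  have hGE : GoodPar C p E E := by
    apply good_to_E hp hE hX Hq Hr X.ncard (diag V) (good_diag hE)
    intro u
    omega
  intro R hR
  obtain ⟨⟨u, v⟩, huv⟩ := C.nonempty_mem R hR
  obtain ⟨a, ha⟩ := Hq R hR
  obtain ⟨b, hb⟩ := hGE.2.2 R hR u v huv
  exact ⟨a + b, by rw [card_eq_quot_mul_block hE hR huv, ha, hb, pow_add]⟩

end AssocScheme

/-- `C` is a `p`-scheme iff both the quotient scheme `C_{V/E}` and the restricted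
scheme `C_X` are `p`-schemes. -/
theorem pScheme_iff_quotient_and_restriction {V : Type*} [Fintype V] {p : ℕ} (hp : p.Prime)
    (C : AssocScheme V) {E : Set (V × V)} (hE : IsSchemeEquiv C E)
    {X : Set V} (hX : X ∈ classesOf E) :
    IsPScheme p C ↔
      ((∀ R ∈ C.classes, ∃ k : ℕ, (quotRel E R).ncard = p ^ k) ∧
       (∀ R ∈ C.classes, (R ∩ X ×ˢ X).Nonempty →
          ∃ k : ℕ, (R ∩ X ×ˢ X).ncard = p ^ k)) := by
  constructor
  · intro hps
    exact AssocScheme.forward_dir hp hE hX hps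
  · rintro ⟨Hq, Hr⟩
    exact AssocScheme.backward_dir hp hE hX Hq Hr
end

section
/- Condition (1) in the previous theorem is essential: for distinct primes p and q, the wreath product C of a regular scheme on p points by a regular scheme on q points is an association scheme on pq points which satisfies that C_X is a p-scheme for every nontrivial block X, has a unique maximal scheme equivalence, and is not a p-scheme. -/
open Set Function

/-- The basis relations of the wreath product of the regular scheme on `ZMod p` by the regular
scheme on `ZMod q`. -/
def wreathClasses (p q : ℕ) [NeZero p] [NeZero q] :
    Set (Set ((ZMod p × ZMod q) × (ZMod p × ZMod q))) :=
  {R | (∃ r : ZMod p, R = {x | x.2.2 = x.1.2 ∧ x.2.1 = x.1.1 + r}) ∨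
       (∃ s : ZMod q, s ≠ 0 ∧ R = {x | x.2.2 = x.1.2 + s})}


namespace Wreath

variable (p q : ℕ) [NeZero p] [NeZero q]

abbrev V := ZMod p × ZMod q

variable {p q}

set_option linter.unusedSectionVars false

/-- The automorphisms of the wreath scheme used to prove regularity of intersection numbers. -/
def aut (g : ZMod q → ZMod p) (t : ZMod q) : V p q → V p q :=
  fun u => (u.1 + g u.2, u.2 + t)

lemma aut_bij (g : ZMod q → ZMod p) (t : ZMod q) : Bijective (aut g t) := by
  refine ⟨?_, ?_⟩
  · intro a b h
    have h2 : a.2 + t = b.2 + t := congrArg Prod.snd h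
    have h2' : a.2 = b.2 := by linear_combination h2
    have h1 : a.1 + g a.2 = b.1 + g b.2 := congrArg Prod.fst h
    rw [h2'] at h1
    have h1' : a.1 = b.1 := by linear_combination h1
    exact Prod.ext h1' h2'
  · intro v
    exact ⟨(v.1 - g (v.2 - t), v.2 - t), by simp [aut]⟩

lemma aut_mem_iff {R : Set (V p q × V p q)} (hR : R ∈ wreathClasses p q)
    (g : ZMod q → ZMod p) (t : ZMod q) (u v : V p q) :
    (u, v) ∈ R ↔ (aut g t u, aut g t v) ∈ R := by
  rcases hR with ⟨r, rfl⟩ | ⟨s, hs, rfl⟩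
  · simp only [mem_setOf_eq, aut]
    constructor
    · rintro ⟨h2, h1⟩
      refine ⟨by rw [h2], ?_⟩
      rw [h2, h1]; ring
    · rintro ⟨h2, h1⟩
      have h2' : v.2 = u.2 := by linear_combination h2
      rw [h2'] at h1
      exact ⟨h2', by linear_combination h1⟩
  · simp only [mem_setOf_eq, aut]
    constructor <;> intro h <;> linear_combination h

lemma ncard_eq_of_aut {R S : Set (V p q × V p q)} (σ : V p q → V p q) (hb : Bijective σ)
    (hR : ∀ u v, (u, v) ∈ R ↔ (σ u, σ v) ∈ R) (hS : ∀ u v, (u, v) ∈ S ↔ (σ u, σ v) ∈ S)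
    (x y : V p q × V p q) (h1 : σ x.1 = y.1) (h2 : σ x.2 = y.2) :
    ({w | (x.1, w) ∈ R ∧ (w, x.2) ∈ S}).ncard = ({w | (y.1, w) ∈ R ∧ (w, y.2) ∈ S}).ncard := by
  have himg : {w | (y.1, w) ∈ R ∧ (w, y.2) ∈ S} = σ '' {w | (x.1, w) ∈ R ∧ (w, x.2) ∈ S} := by
    ext w'
    simp only [mem_image, mem_setOf_eq]
    constructor
    · rintro ⟨hr, hs⟩
      obtain ⟨w, rfl⟩ := hb.2 w'
      rw [← h1] at hr; rw [← h2] at hs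
      exact ⟨w, ⟨(hR _ _).2 hr, (hS _ _).2 hs⟩, rfl⟩
    · rintro ⟨w, ⟨hr, hs⟩, rfl⟩
      rw [← h1, ← h2]
      exact ⟨(hR _ _).1 hr, (hS _ _).1 hs⟩
  rw [himg, Set.ncard_image_of_injective _ hb.1]

lemma part_lemma (x : V p q × V p q) : ∃! R, R ∈ wreathClasses p q ∧ x ∈ R := by
  by_cases h : x.2.2 = x.1.2
  · refine ⟨{y : V p q × V p q | y.2.2 = y.1.2 ∧ y.2.1 = y.1.1 + (x.2.1 - x.1.1)},
      ⟨Or.inl ⟨x.2.1 - x.1.1, rfl⟩, h, by ring⟩, ?_⟩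
    rintro R ⟨hR | hR, hxR⟩
    · obtain ⟨r, rfl⟩ := hR
      obtain ⟨-, h1⟩ := hxR
      have : r = x.2.1 - x.1.1 := by linear_combination -h1
      rw [this]
    · obtain ⟨s, hs, rfl⟩ := hR
      have hx : x.2.2 = x.1.2 + s := hxR
      exact (hs (show s = 0 by linear_combination h - hx)).elim
  · refine ⟨{y : V p q × V p q | y.2.2 = y.1.2 + (x.2.2 - x.1.2)},
      ⟨Or.inr ⟨x.2.2 - x.1.2, fun h0 => h (by linear_combination h0), rfl⟩,
        show x.2.2 = x.1.2 + _ by ring⟩, ?_⟩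
    rintro R ⟨hR | hR, hxR⟩
    · obtain ⟨r, rfl⟩ := hR
      obtain ⟨h2, -⟩ := hxR
      exact (h h2).elim
    · obtain ⟨s, hs, rfl⟩ := hR
      have hx : x.2.2 = x.1.2 + s := hxR
      have : s = x.2.2 - x.1.2 := by linear_combination -hx
      rw [this]

lemma nonempty_lemma {R : Set (V p q × V p q)} (hR : R ∈ wreathClasses p q) : R.Nonempty := by
  rcases hR with ⟨r, rfl⟩ | ⟨s, hs, rfl⟩
  · exact ⟨((0, 0), (r, 0)), rfl, by simp⟩
  · exact ⟨((0, 0), (0, s)), by simp [mem_setOf_eq]⟩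

lemma transp_lemma {R : Set (V p q × V p q)} (hR : R ∈ wreathClasses p q) :
    transp R ∈ wreathClasses p q := by
  rcases hR with ⟨r, rfl⟩ | ⟨s, hs, rfl⟩
  · refine Or.inl ⟨-r, ?_⟩
    ext x
    simp only [transp, mem_setOf_eq]
    constructor
    · rintro ⟨h2, h1⟩; exact ⟨h2.symm, by linear_combination -h1⟩
    · rintro ⟨h2, h1⟩; exact ⟨h2.symm, by linear_combination -h1⟩
  · refine Or.inr ⟨-s, neg_ne_zero.2 hs, ?_⟩
    ext x
    simp only [transp, mem_setOf_eq]
    constructor <;> intro h <;> linear_combination -h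

lemma diag_lemma : diag (V p q) ∈ wreathClasses p q := by
  refine Or.inl ⟨0, ?_⟩
  ext x
  simp only [diag, mem_setOf_eq, add_zero]
  constructor
  · rintro h; rw [h]; exact ⟨rfl, rfl⟩
  · rintro ⟨h2, h1⟩; exact Prod.ext h1.symm h2.symm

lemma ncard_A (r : ZMod p) :
    ({x : V p q × V p q | x.2.2 = x.1.2 ∧ x.2.1 = x.1.1 + r}).ncard = p * q := by
  have hAr : {x : V p q × V p q | x.2.2 = x.1.2 ∧ x.2.1 = x.1.1 + r} =
      range (fun v : V p q => (v, (v.1 + r, v.2))) := by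
    ext x
    simp only [mem_setOf_eq, mem_range]
    constructor
    · rintro ⟨h2, h1⟩
      exact ⟨x.1, Prod.ext rfl (Prod.ext h1.symm h2.symm)⟩
    · rintro ⟨v, rfl⟩; exact ⟨rfl, rfl⟩
  rw [hAr, ← image_univ, Set.ncard_image_of_injective _ (fun a b h => congrArg Prod.fst h),
    Set.ncard_univ]
  simp [Nat.card_prod, Nat.card_zmod]

lemma ncard_A_block (r : ZMod p) (c : ZMod q) :
    ({x : V p q × V p q | x.2.2 = x.1.2 ∧ x.2.1 = x.1.1 + r} ∩
      ({v : V p q | v.2 = c} ×ˢ {v : V p q | v.2 = c})).ncard = p := by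
  have hs : {x : V p q × V p q | x.2.2 = x.1.2 ∧ x.2.1 = x.1.1 + r} ∩
      ({v : V p q | v.2 = c} ×ˢ {v : V p q | v.2 = c}) =
      range (fun a : ZMod p => ((a, c), (a + r, c))) := by
    ext z
    simp only [mem_inter_iff, mem_setOf_eq, mem_prod, mem_range]
    constructor
    · rintro ⟨⟨h2, h1⟩, hz1, hz2⟩
      exact ⟨z.1.1, Prod.ext (Prod.ext rfl hz1.symm) (Prod.ext h1.symm hz2.symm)⟩
    · rintro ⟨a, rfl⟩
      exact ⟨⟨rfl, rfl⟩, rfl, rfl⟩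
  rw [hs, ← image_univ,
    Set.ncard_image_of_injective _ (fun a b h => congrArg (fun w => w.1.1) h),
    Set.ncard_univ, Nat.card_zmod]

/-- In `ZMod n` for `n` prime, any element is `(k+1) * s` for a nonzero `s`. -/
lemma reach (n : ℕ) [NeZero n] (hn : n.Prime) {s : ZMod n} (hs : s ≠ 0) (m : ZMod n) :
    ∃ k : ℕ, ((k : ZMod n) + 1) * s = m := by
  haveI : Fact n.Prime := ⟨hn⟩
  refine ⟨(m * s⁻¹ - 1).val, ?_⟩
  rw [ZMod.natCast_rightInverse (m * s⁻¹ - 1)]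
  rw [sub_add_cancel, mul_assoc, inv_mul_cancel₀ hs, mul_one]

lemma gen_trans {F : Set ((ZMod p × ZMod q) × (ZMod p × ZMod q))}
    (htr : ∀ {a b c}, (a, b) ∈ F → (b, c) ∈ F → (a, c) ∈ F)
    {s : ZMod q} (hsub : {x : (ZMod p × ZMod q) × (ZMod p × ZMod q) | x.2.2 = x.1.2 + s} ⊆ F) :
    ∀ (k : ℕ) (u v : ZMod p × ZMod q), v.2 = u.2 + ((k : ZMod q) + 1) * s → (u, v) ∈ F := by
  intro k
  induction k with
  | zero =>
    intro u v h
    exact hsub (show v.2 = u.2 + s by push_cast at h; linear_combination h)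
  | succ k ih =>
    intro u v h
    refine htr (ih u (0, u.2 + ((k : ZMod q) + 1) * s) rfl) (hsub ?_)
    show v.2 = (u.2 + ((k : ZMod q) + 1) * s) + s
    push_cast at h
    linear_combination h

lemma gen_transA {F : Set ((ZMod p × ZMod q) × (ZMod p × ZMod q))}
    (htr : ∀ {a b c}, (a, b) ∈ F → (b, c) ∈ F → (a, c) ∈ F)
    {r : ZMod p}
    (hsub : {x : (ZMod p × ZMod q) × (ZMod p × ZMod q) |
      x.2.2 = x.1.2 ∧ x.2.1 = x.1.1 + r} ⊆ F) :
    ∀ (k : ℕ) (u v : ZMod p × ZMod q), v.2 = u.2 → v.1 = u.1 + ((k : ZMod p) + 1) * r →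
      (u, v) ∈ F := by
  intro k
  induction k with
  | zero =>
    intro u v h2 h1
    exact hsub ⟨h2, by push_cast at h1; linear_combination h1⟩
  | succ k ih =>
    intro u v h2 h1
    refine htr (ih u (u.1 + ((k : ZMod p) + 1) * r, u.2) rfl rfl) (hsub ⟨h2, ?_⟩)
    show v.1 = (u.1 + ((k : ZMod p) + 1) * r) + r
    push_cast at h1
    linear_combination h1

/-- The classification of scheme equivalences of the wreath scheme. -/
lemma classify (hp : p.Prime) (hq : q.Prime)
    {D : Set (Set ((ZMod p × ZMod q) × (ZMod p × ZMod q)))} (hD : D ⊆ wreathClasses p q)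
    (heq : Equivalence fun u v : ZMod p × ZMod q => (u, v) ∈ ⋃₀ D) :
    ⋃₀ D = diag (ZMod p × ZMod q) ∨
    ⋃₀ D = {x : (ZMod p × ZMod q) × (ZMod p × ZMod q) | x.2.2 = x.1.2} ∨
    ⋃₀ D = Set.univ := by
  by_cases h1 : ∃ x ∈ ⋃₀ D, x.2.2 ≠ x.1.2
  · right; right
    obtain ⟨x, hxF, hx⟩ := h1
    obtain ⟨R, hRD, hxR⟩ := hxF
    rcases hD hRD with ⟨r, rfl⟩ | ⟨s, hs, rfl⟩
    · obtain ⟨h2, -⟩ := hxR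
      exact (hx h2).elim
    · have hsub : {x : (ZMod p × ZMod q) × (ZMod p × ZMod q) | x.2.2 = x.1.2 + s} ⊆ ⋃₀ D :=
        subset_sUnion_of_mem hRD
      rw [eq_univ_iff_forall]
      intro z
      obtain ⟨k, hk⟩ := reach q hq hs (z.2.2 - z.1.2)
      exact gen_trans (fun hab hbc => heq.trans hab hbc) hsub k z.1 z.2
        (by linear_combination -hk)
  · by_cases h2 : ∃ x ∈ ⋃₀ D, x.2.1 ≠ x.1.1
    · right; left
      push_neg at h1
      obtain ⟨x, hxF, hx⟩ := h2
      obtain ⟨R, hRD, hxR⟩ := hxF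
      rcases hD hRD with ⟨r, rfl⟩ | ⟨s, hs, rfl⟩
      · obtain ⟨hx2, hx1⟩ := hxR
        have hr : r ≠ 0 := by
          intro h0
          rw [h0, add_zero] at hx1
          exact hx hx1
        have hsub : {y : (ZMod p × ZMod q) × (ZMod p × ZMod q) |
            y.2.2 = y.1.2 ∧ y.2.1 = y.1.1 + r} ⊆ ⋃₀ D := subset_sUnion_of_mem hRD
        ext z
        constructor
        · intro hz
          exact h1 z hz
        · intro hz
          obtain ⟨k, hk⟩ := reach p hp hr (z.2.1 - z.1.1)
          exact gen_transA (fun hab hbc => heq.trans hab hbc) hsub k z.1 z.2 hz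
            (by linear_combination -hk)
      · have hx2 : x.2.2 = x.1.2 + s := hxR
        have hx2' : x.2.2 = x.1.2 := h1 x ⟨_, hRD, hxR⟩
        exact (hs (by linear_combination hx2' - hx2)).elim
    · left
      push_neg at h1 h2
      ext z
      constructor
      · intro hz
        exact Prod.ext (h2 z hz).symm (h1 z hz).symm
      · intro hz
        have hz' : z.1 = z.2 := hz
        show (z.1, z.2) ∈ ⋃₀ D
        rw [hz']
        exact heq.refl z.2

end Wreath

/-- for distinct primes `p, q`, the wreath product of a regular scheme on `p`
points by a regular scheme on `q` points is an association scheme on `pq` points, every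
restriction to a nontrivial block is a `p`-scheme, it has a unique maximal scheme equivalence,
but it is not a `p`-scheme. -/
theorem wreath_counterexample (p q : ℕ) [NeZero p] [NeZero q]
    (hp : p.Prime) (hq : q.Prime) (hpq : p ≠ q) :
    ∃ C : AssocScheme (ZMod p × ZMod q),
      C.classes = wreathClasses p q ∧
      (∀ E : Set ((ZMod p × ZMod q) × (ZMod p × ZMod q)), IsSchemeEquiv C E →
        ∀ X ∈ classesOf E, X ≠ Set.univ →
          ∀ R ∈ C.classes, (R ∩ X ×ˢ X).Nonempty →
            ∃ k : ℕ, (R ∩ X ×ˢ X).ncard = p ^ k) ∧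
      (∃! E : Set ((ZMod p × ZMod q) × (ZMod p × ZMod q)), MaximalEquiv C E) ∧
      ¬ IsPScheme p C := by
  classical
  haveI : Fact p.Prime := ⟨hp⟩
  haveI : Fact q.Prime := ⟨hq⟩
  refine ⟨⟨wreathClasses p q, Wreath.part_lemma, fun R hR => Wreath.nonempty_lemma hR,
    fun R hR => Wreath.transp_lemma hR, Wreath.diag_lemma, ?_⟩, rfl, ?_, ?_, ?_⟩
  · -- intersection numbers
    intro R hR S hS T hT x hx y hy
    rcases hT with ⟨r, rfl⟩ | ⟨s, hs, rfl⟩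
    · obtain ⟨hx2, hx1⟩ := hx
      obtain ⟨hy2, hy1⟩ := hy
      refine Wreath.ncard_eq_of_aut (Wreath.aut (fun _ => y.1.1 - x.1.1) (y.1.2 - x.1.2))
        (Wreath.aut_bij _ _) (fun u v => Wreath.aut_mem_iff hR _ _ u v)
        (fun u v => Wreath.aut_mem_iff hS _ _ u v) x y ?_ ?_
      · refine Prod.ext ?_ ?_
        · show x.1.1 + (y.1.1 - x.1.1) = y.1.1
          ring
        · show x.1.2 + (y.1.2 - x.1.2) = y.1.2
          ring
      · refine Prod.ext ?_ ?_
        · show x.2.1 + (y.1.1 - x.1.1) = y.2.1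
          linear_combination hx1 - hy1
        · show x.2.2 + (y.1.2 - x.1.2) = y.2.2
          linear_combination hx2 - hy2
    · have hx2 : x.2.2 = x.1.2 + s := hx
      have hy2 : y.2.2 = y.1.2 + s := hy
      have hne : x.2.2 ≠ x.1.2 := fun h => hs (by linear_combination h - hx2)
      refine Wreath.ncard_eq_of_aut
        (Wreath.aut (fun c => if c = x.1.2 then y.1.1 - x.1.1 else y.2.1 - x.2.1)
          (y.1.2 - x.1.2))
        (Wreath.aut_bij _ _) (fun u v => Wreath.aut_mem_iff hR _ _ u v)
        (fun u v => Wreath.aut_mem_iff hS _ _ u v) x y ?_ ?_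
      · refine Prod.ext ?_ ?_
        · show x.1.1 + (if x.1.2 = x.1.2 then y.1.1 - x.1.1 else y.2.1 - x.2.1) = y.1.1
          rw [if_pos rfl]; ring
        · show x.1.2 + (y.1.2 - x.1.2) = y.1.2
          ring
      · refine Prod.ext ?_ ?_
        · show x.2.1 + (if x.2.2 = x.1.2 then y.1.1 - x.1.1 else y.2.1 - x.2.1) = y.2.1
          rw [if_neg hne]; ring
        · show x.2.2 + (y.1.2 - x.1.2) = y.2.2
          linear_combination hx2 - hy2
  · -- restriction to any nontrivial block is a p-scheme
    intro E hE X hX hXu R hR hne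
    obtain ⟨⟨D, hD, rfl⟩, heq⟩ := hE
    obtain ⟨u, rfl⟩ := hX
    rcases Wreath.classify hp hq hD heq with h | h | h
    · -- E = diag
      rw [h] at hne hXu ⊢
      have hX' : {v : ZMod p × ZMod q | (u, v) ∈ diag (ZMod p × ZMod q)} = {u} := by
        ext v
        simp only [diag, mem_setOf_eq, mem_singleton_iff]
        exact eq_comm
      rw [hX'] at hne ⊢
      obtain ⟨z, hzR, hz1, hz2⟩ := hne
      have hz : z = (u, u) := Prod.ext hz1 hz2
      refine ⟨0, ?_⟩
      have hset : R ∩ (({u} : Set (ZMod p × ZMod q)) ×ˢ {u}) = {(u, u)} := by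
        apply Set.Subset.antisymm
        · rintro w ⟨hwR, hw1, hw2⟩
          exact Prod.ext hw1 hw2
        · rintro w hw
          rw [mem_singleton_iff] at hw
          subst hw
          exact ⟨hz ▸ hzR, rfl, rfl⟩
      rw [hset]
      simp
    · -- E = E₀
      rw [h] at hne ⊢
      have hX' : {v : ZMod p × ZMod q |
          (u, v) ∈ {x : (ZMod p × ZMod q) × (ZMod p × ZMod q) | x.2.2 = x.1.2}} =
          {v : ZMod p × ZMod q | v.2 = u.2} := rfl
      rw [hX'] at hne ⊢
      rcases hR with ⟨r, rfl⟩ | ⟨s, hs, rfl⟩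
      · exact ⟨1, by rw [pow_one]; exact Wreath.ncard_A_block r u.2⟩
      · exfalso
        obtain ⟨z, hzR, hz1, hz2⟩ := hne
        have hzR' : z.2.2 = z.1.2 + s := hzR
        have hz1' : z.1.2 = u.2 := hz1
        have hz2' : z.2.2 = u.2 := hz2
        exact hs (by linear_combination hz2' - hzR' - hz1')
    · -- E = univ, impossible
      exfalso
      apply hXu
      rw [h]
      ext v
      simp
  · -- unique maximal scheme equivalence
    have h1q : (1 : ZMod q) ≠ 0 := by
      haveI : Fact (1 < q) := ⟨hq.one_lt⟩
      exact one_ne_zero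
    have h1p : (1 : ZMod p) ≠ 0 := by
      haveI : Fact (1 < p) := ⟨hp.one_lt⟩
      exact one_ne_zero
    set E₀ : Set ((ZMod p × ZMod q) × (ZMod p × ZMod q)) := {x | x.2.2 = x.1.2} with hE₀def
    have hE0scheme : (∃ D ⊆ wreathClasses p q, E₀ = ⋃₀ D) ∧
        Equivalence (fun u v : ZMod p × ZMod q => (u, v) ∈ E₀) := by
      constructor
      · refine ⟨{R | ∃ r : ZMod p,
          R = {x : (ZMod p × ZMod q) × (ZMod p × ZMod q) |
            x.2.2 = x.1.2 ∧ x.2.1 = x.1.1 + r}}, ?_, ?_⟩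
        · rintro R ⟨r, rfl⟩
          exact Or.inl ⟨r, rfl⟩
        · ext x
          simp only [hE₀def, mem_sUnion, mem_setOf_eq]
          constructor
          · intro hx
            exact ⟨_, ⟨x.2.1 - x.1.1, rfl⟩, hx, by ring⟩
          · rintro ⟨R, ⟨r, rfl⟩, hx, -⟩
            exact hx
      · exact ⟨fun z => rfl, fun h => h.symm, fun h h' => h'.trans h⟩
    have hE0ne : E₀ ≠ Set.univ := by
      intro h
      have : (((0 : ZMod p), (0 : ZMod q)), ((0 : ZMod p), (1 : ZMod q))) ∈ E₀ := by
        rw [h]; exact mem_univ _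
      exact h1q this
    refine ⟨E₀, ⟨hE0scheme, hE0ne, ?_⟩, ?_⟩
    · intro F hF hsub hFne
      obtain ⟨⟨D, hD, rfl⟩, heq⟩ := hF
      rcases Wreath.classify hp hq hD heq with h | h | h
      · exfalso
        have hmem : (((0 : ZMod p), (0 : ZMod q)), ((1 : ZMod p), (0 : ZMod q))) ∈ E₀ := rfl
        have hd := hsub hmem
        rw [h] at hd
        have hd' : ((0 : ZMod p), (0 : ZMod q)) = ((1 : ZMod p), (0 : ZMod q)) := hd
        exact h1p (congrArg Prod.fst hd').symm
      · exact h
      · exact (hFne h).elim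
    · intro F hF
      obtain ⟨hFs, hFne, hFmax⟩ := hF
      obtain ⟨⟨D, hD, rfl⟩, heq⟩ := hFs
      rcases Wreath.classify hp hq hD heq with h | h | h
      · exfalso
        have hsub : ⋃₀ D ⊆ E₀ := by
          rw [h]
          intro x hx
          exact (congrArg Prod.snd (hx : x.1 = x.2)).symm
        have heqd := hFmax E₀ hE0scheme hsub hE0ne
        have hmem : (((0 : ZMod p), (0 : ZMod q)), ((1 : ZMod p), (0 : ZMod q))) ∈ E₀ := rfl
        rw [heqd, h] at hmem
        have hd' : ((0 : ZMod p), (0 : ZMod q)) = ((1 : ZMod p), (0 : ZMod q)) := hmem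
        exact h1p (congrArg Prod.fst hd').symm
      · rw [hE₀def]
        exact h
      · exact (hFne h).elim
  · -- not a p-scheme
    intro hps
    obtain ⟨k, hk⟩ := hps {x : (ZMod p × ZMod q) × (ZMod p × ZMod q) |
      x.2.2 = x.1.2 ∧ x.2.1 = x.1.1 + 0} (Or.inl ⟨0, rfl⟩)
    rw [Wreath.ncard_A 0] at hk
    have hdvd : q ∣ p ^ k := hk ▸ dvd_mul_left q p
    exact hpq ((Nat.prime_dvd_prime_iff_eq hq hp).1 (hq.dvd_of_dvd_pow hdvd)).symm
end

section
/- Let C be a strongly connected digraph Γ = (V, R) that is cyclically p-partite via parts V_0, …, V_{p-1}, where R is a basis relation of an association scheme C. Then the relation E = {(u,v) : u, v lie in the same part} is a union of the relations R^{ip}, i ≥ 0, and hence E is a scheme equivalence of C with exactly p classes. -/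
open Set Function

lemma relPow_f {V : Type*} {p : ℕ} {R : Set (V × V)} {f : V → ZMod p}
    (harc : ∀ u v : V, (u, v) ∈ R → f v = f u + 1) :
    ∀ n : ℕ, ∀ u v : V, (u, v) ∈ relPow R n → f v = f u + n := by
  intro n
  induction n with
  | zero =>
    intro u v h
    simp only [relPow, diag, Set.mem_setOf_eq] at h
    simp [h]
  | succ n ih =>
    intro u v h
    obtain ⟨w, hw1, hw2⟩ := h
    rw [harc w v hw2, ih u w hw1]
    push_cast
    ring

lemma class_subset_relPow {V : Type*} [Fintype V] (C : AssocScheme V)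
    {R : Set (V × V)} (hR : R ∈ C.classes) :
    ∀ n : ℕ, ∀ T ∈ C.classes, ∀ x ∈ T, x ∈ relPow R n → T ⊆ relPow R n := by
  intro n
  induction n with
  | zero =>
    intro T hT x hx hx0
    have hu := C.part x
    obtain ⟨S, _, hS⟩ := hu
    have h1 : T = S := hS T ⟨hT, hx⟩
    have h2 : diag V = S := hS (diag V) ⟨C.diag_mem, hx0⟩
    rw [h1, ← h2]
    intro y hy
    exact hy
  | succ n ih =>
    intro T hT x hx hx1
    obtain ⟨w, hw1, hw2⟩ := hx1
    obtain ⟨S, ⟨hS, hxwS⟩, _⟩ := C.part (x.1, w)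
    have hSsub : S ⊆ relPow R n := ih S hS (x.1, w) hxwS hw1
    intro y hy
    have hcount := C.inter S hS R hR T hT x hx y hy
    have hxpos : 0 < ({z : V | (x.1, z) ∈ S ∧ (z, x.2) ∈ R}).ncard := by
      rw [Set.ncard_pos (Set.toFinite _)]
      exact ⟨w, hxwS, hw2⟩
    rw [hcount] at hxpos
    rw [Set.ncard_pos (Set.toFinite _)] at hxpos
    obtain ⟨w', hw'1, hw'2⟩ := hxpos
    exact ⟨w', hSsub hw'1, hw'2⟩

/-- if a non-diagonal basis relation `R` with `⟨R⟩ = V × V` is cyclically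
`p`-partite via parts given by `f`, then the same-part relation `E` is the union of the
relations `R^{ip}` and is a scheme equivalence with exactly `p` classes. -/
theorem same_part_equiv {V : Type*} [Fintype V] {p : ℕ} (hp : p.Prime)
    (C : AssocScheme V) {R : Set (V × V)} (hR : R ∈ C.classes) (hRd : R ≠ diag V)
    (hgen : gen R = Set.univ) (f : V → ZMod p) (hsur : Function.Surjective f)
    (harc : ∀ u v : V, (u, v) ∈ R → f v = f u + 1) :
    ({x : V × V | f x.1 = f x.2} = ⋃ i : ℕ, relPow R (i * p)) ∧
    IsSchemeEquiv C {x : V × V | f x.1 = f x.2} ∧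
    (classesOf {x : V × V | f x.1 = f x.2}).ncard = p := by
  haveI : NeZero p := ⟨hp.pos.ne'⟩
  set E : Set (V × V) := {x : V × V | f x.1 = f x.2} with hE
  -- Part 1: E = ⋃ i, relPow R (i * p)
  have h1 : E = ⋃ i : ℕ, relPow R (i * p) := by
    ext ⟨u, v⟩
    constructor
    · intro huv
      have : (u, v) ∈ gen R := by rw [hgen]; trivial
      obtain ⟨s, ⟨n, rfl⟩, hn⟩ := this
      have hf : f v = f u + n := relPow_f harc n u v hn
      have hmod : (n : ZMod p) = 0 := by
        have : f u = f u + (n : ZMod p) := by rw [← hf]; exact huv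
        linear_combination -this
      have hdvd : p ∣ n := (ZMod.natCast_eq_zero_iff n p).mp hmod
      obtain ⟨i, rfl⟩ := hdvd
      exact Set.mem_iUnion.mpr ⟨i, by rwa [Nat.mul_comm] at hn⟩
    · intro huv
      obtain ⟨s, ⟨i, rfl⟩, hn⟩ := huv
      have hf : f v = f u + (i * p : ℕ) := relPow_f harc (i * p) u v hn
      have : ((i * p : ℕ) : ZMod p) = 0 := by
        push_cast
        simp [ZMod.natCast_self]
      rw [this, add_zero] at hf
      exact hf.symm
  refine ⟨h1, ⟨⟨{S | S ∈ C.classes ∧ S ⊆ E}, fun S hS => hS.1, ?_⟩, ?_⟩, ?_⟩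
  · -- E = ⋃₀ D
    ext x
    constructor
    · intro hx
      obtain ⟨T, ⟨hT, hxT⟩, _⟩ := C.part x
      have hxE : x ∈ ⋃ i : ℕ, relPow R (i * p) := h1 ▸ hx
      obtain ⟨s, ⟨i, rfl⟩, hn⟩ := hxE
      have hTsub : T ⊆ relPow R (i * p) := class_subset_relPow C hR (i * p) T hT x hxT hn
      have hTE : T ⊆ E := fun y hy => by
        rw [h1]
        exact Set.mem_iUnion.mpr ⟨i, hTsub hy⟩
      exact ⟨T, ⟨hT, hTE⟩, hxT⟩
    · rintro ⟨S, ⟨_, hSE⟩, hxS⟩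
      exact hSE hxS
  · -- Equivalence
    exact ⟨fun u => rfl, fun h => h.symm, fun h h' => h.trans h'⟩
  · -- count of classes
    have hcl : classesOf E = Set.range (fun r : ZMod p => {v : V | f v = r}) := by
      ext X
      constructor
      · rintro ⟨u, rfl⟩
        exact ⟨f u, by ext v; simp [hE, eq_comm]⟩
      · rintro ⟨r, rfl⟩
        obtain ⟨u, rfl⟩ := hsur r
        exact ⟨u, by ext v; simp [hE, eq_comm]⟩
    rw [hcl]
    have hinj : Function.Injective (fun r : ZMod p => {v : V | f v = r}) := by
      intro r s hrs
      obtain ⟨u, rfl⟩ := hsur r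
      have hu : u ∈ {v : V | f v = f u} := rfl
      rw [show {v : V | f v = f u} = (fun r : ZMod p => {v : V | f v = r}) (f u) from rfl,
        hrs] at hu
      exact hu
    rw [← Set.image_univ, Set.ncard_image_of_injective _ hinj, Set.ncard_univ,
      Nat.card_eq_fintype_card, ZMod.card]
end
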